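/- arXiv:2505.11431 — 12 statements merged into one kernel-verified Lean document; each statement's English description precedes it below -/
import Mathlib

section
/- Let n ≥ 1 and let α_1, …, α_n ∈ [0,1) be real numbers with Σ_{k=1}^n α_k = 1. Then for every subset I ⊆ {1,…,n}: (1 − ∏_{k=1}^n (1−α_k))·Σ_{i∈I} α_i + ∏_{i∈I}(1−α_i) + (1/2)·∏_{k=1}^n (1−α_k)·(Σ_{i∈I} α_i/(1−α_i))·(Σ_{j∉I} α_j) ≤ 1. -/
/-!
Write `S = ∑_{i ∈ I} α i`, `T = ∑_{i ∈ I} α i / (1 - α i)`, `Q = ∏_{i ∈ I} (1 - α i)` and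
`R = ∏_{j ∉ I} (1 - α j)`. Since `∑_{j ∉ I} α j = 1 - S`, the left-hand side equals
`S + Q + Q R (T (1 - S) / 2 - S)`, an affine function of `R`, and `S ≤ R ≤ 1` by the Weierstrass
product inequality. At `R = S` the bound reduces to `Q (1 + S + S T / 2) ≤ 1`, which is proved by
induction on `I`; at `R = 1` it reduces to `Q (1 + T / 2) ≤ 1`, which follows from the same bound
and `T ≤ S (1 + T)`, a consequence of `α i / (1 - α i) = α i (1 + α i / (1 - α i))`. The latter
inequality also drives the inductive step.
-/

open Finset

namespace Finset

variable {ι : Type*} {s : Finset ι} {x : ι → ℝ}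

theorem one_sub_sum_le_prod_one_sub (h0 : ∀ i ∈ s, 0 ≤ x i) (h1 : ∀ i ∈ s, x i ≤ 1) :
    1 - ∑ i ∈ s, x i ≤ ∏ i ∈ s, (1 - x i) := by
  classical
  induction s using Finset.induction_on with
  | empty => simp
  | insert a s ha ih =>
    rw [prod_insert ha, sum_insert ha]
    have hxa0 := h0 a (mem_insert_self a s)
    have hxa1 := h1 a (mem_insert_self a s)
    have ih := ih (fun i hi ↦ h0 i (mem_insert_of_mem hi)) (fun i hi ↦ h1 i (mem_insert_of_mem hi))
    have hS : 0 ≤ ∑ i ∈ s, x i := sum_nonneg fun i hi ↦ h0 i (mem_insert_of_mem hi)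
    calc 1 - (x a + ∑ i ∈ s, x i) ≤ (1 - x a) * (1 - ∑ i ∈ s, x i) := by
          linarith [mul_nonneg hxa0 hS]
      _ ≤ (1 - x a) * ∏ i ∈ s, (1 - x i) := by gcongr

theorem sum_div_one_sub_le_sum_mul (h0 : ∀ i ∈ s, 0 ≤ x i) (h1 : ∀ i ∈ s, x i < 1) :
    ∑ i ∈ s, x i / (1 - x i) ≤ (∑ i ∈ s, x i) * (1 + ∑ i ∈ s, x i / (1 - x i)) := by
  rw [sum_mul]
  refine sum_le_sum fun i hi ↦ ?_
  have hpos : 0 < 1 - x i := sub_pos.2 (h1 i hi)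
  have hle : x i / (1 - x i) ≤ ∑ j ∈ s, x j / (1 - x j) :=
    single_le_sum (fun j hj ↦ div_nonneg (h0 j hj) (sub_pos.2 (h1 j hj)).le) hi
  calc x i / (1 - x i) = x i * (1 + x i / (1 - x i)) := by field_simp; ring
    _ ≤ x i * (1 + ∑ j ∈ s, x j / (1 - x j)) := by gcongr; exact h0 i hi

theorem prod_one_sub_mul_le_one (h0 : ∀ i ∈ s, 0 ≤ x i) (h1 : ∀ i ∈ s, x i < 1) :
    (∏ i ∈ s, (1 - x i)) *
      (1 + ∑ i ∈ s, x i + (1 / 2) * (∑ i ∈ s, x i) * ∑ i ∈ s, x i / (1 - x i)) ≤ 1 := by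
  classical
  induction s using Finset.induction_on with
  | empty => simp
  | insert a s ha ih =>
    have h0' : ∀ i ∈ s, 0 ≤ x i := fun i hi ↦ h0 i (mem_insert_of_mem hi)
    have h1' : ∀ i ∈ s, x i < 1 := fun i hi ↦ h1 i (mem_insert_of_mem hi)
    have hxa0 := h0 a (mem_insert_self a s)
    have hxa1 := h1 a (mem_insert_self a s)
    rw [prod_insert ha, sum_insert ha, sum_insert ha]
    set Q := ∏ i ∈ s, (1 - x i)
    set S := ∑ i ∈ s, x i
    set T := ∑ i ∈ s, x i / (1 - x i)
    have hQ : 0 ≤ Q := prod_nonneg fun i hi ↦ (sub_pos.2 (h1' i hi)).le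
    have hT : 0 ≤ T := sum_nonneg fun i hi ↦ div_nonneg (h0' i hi) (sub_pos.2 (h1' i hi)).le
    have hTS : T ≤ S * (1 + T) := sum_div_one_sub_le_sum_mul h0' h1'
    have step : (1 - x a) * (1 + (x a + S) + (1 / 2) * (x a + S) * (x a / (1 - x a) + T))
        = (1 + S + (1 / 2) * S * T) - (1 / 2) * x a * (S * (1 + T) - T + x a * (1 + T)) := by
      field_simp [(sub_pos.2 hxa1).ne']
      ring
    calc (1 - x a) * Q * (1 + (x a + S) + (1 / 2) * (x a + S) * (x a / (1 - x a) + T))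
        = Q * ((1 + S + (1 / 2) * S * T) - (1 / 2) * x a * (S * (1 + T) - T + x a * (1 + T))) := by
          rw [mul_assoc, mul_left_comm, step]
      _ ≤ Q * (1 + S + (1 / 2) * S * T) := by
          gcongr
          apply sub_le_self
          have : 0 ≤ x a * (1 + T) := by positivity
          have : 0 ≤ S * (1 + T) - T := by linarith
          positivity
      _ ≤ 1 := ih h0' h1'

end Finset

theorem border_inequality_of_bounds {S T Q R : ℝ} (hS : 0 ≤ S) (hQ : 0 ≤ Q) (hSR : S ≤ R)
    (hR1 : R ≤ 1)
    (hL : Q * (1 + S + (1 / 2) * S * T) ≤ 1) (hTS : T ≤ S * (1 + T)) :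
    (1 - Q * R) * S + Q + (1 / 2) * (Q * R) * T * (1 - S) ≤ 1 := by
  have hS1 : 0 ≤ 1 - S := by linarith
  have affine : (1 - Q * R) * S + Q + (1 / 2) * (Q * R) * T * (1 - S)
      = S + Q + Q * R * ((1 / 2) * T * (1 - S) - S) := by ring
  rw [affine]
  rcases le_total 0 ((1 / 2) * T * (1 - S) - S) with hc | hc
  · calc S + Q + Q * R * ((1 / 2) * T * (1 - S) - S)
        ≤ S + Q + Q * 1 * ((1 / 2) * T * (1 - S) - S) := by gcongr
      _ = S + (1 - S) * (Q * (1 + (1 / 2) * T)) := by ring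
      _ ≤ S + (1 - S) * 1 := by
          gcongr
          exact (mul_le_mul_of_nonneg_left (by linarith) hQ).trans hL
      _ = 1 := by ring
  · calc S + Q + Q * R * ((1 / 2) * T * (1 - S) - S)
        ≤ S + Q + Q * S * ((1 / 2) * T * (1 - S) - S) :=
          add_le_add_right (mul_le_mul_of_nonpos_right (mul_le_mul_of_nonneg_left hSR hQ) hc) _
      _ = S + (1 - S) * (Q * (1 + S + (1 / 2) * S * T)) := by ring
      _ ≤ S + (1 - S) * 1 := by gcongr
      _ = 1 := by ring

theorem stmt_0_general (n : ℕ) (α : Fin n → ℝ)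
    (hα : ∀ i, 0 ≤ α i ∧ α i < 1) (hsum : ∑ i, α i = 1) (I : Finset (Fin n)) :
    (1 - ∏ k, (1 - α k)) * (∑ i ∈ I, α i)
      + (∏ i ∈ I, (1 - α i))
      + (1 / 2) * (∏ k, (1 - α k)) * (∑ i ∈ I, α i / (1 - α i)) * (∑ j ∈ Iᶜ, α j)
      ≤ 1 := by
  have h0 : ∀ s : Finset (Fin n), ∀ i ∈ s, 0 ≤ α i := fun _ i _ ↦ (hα i).1
  have h1 : ∀ s : Finset (Fin n), ∀ i ∈ s, α i < 1 := fun _ i _ ↦ (hα i).2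
  have hU : ∑ j ∈ Iᶜ, α j = 1 - ∑ i ∈ I, α i := by
    rw [← hsum, ← sum_add_sum_compl I]; ring
  have hSR : ∑ i ∈ I, α i ≤ ∏ j ∈ Iᶜ, (1 - α j) := by
    simpa [hU] using one_sub_sum_le_prod_one_sub (h0 Iᶜ) fun i hi ↦ (h1 Iᶜ i hi).le
  have hR1 : ∏ j ∈ Iᶜ, (1 - α j) ≤ 1 :=
    prod_le_one (fun i _ ↦ sub_nonneg.2 (hα i).2.le) fun i _ ↦ sub_le_self _ (hα i).1
  rw [← prod_mul_prod_compl I, hU]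
  exact border_inequality_of_bounds (sum_nonneg (h0 I))
    (prod_nonneg fun i _ ↦ sub_nonneg.2 (hα i).2.le) hSR hR1
    (prod_one_sub_mul_le_one (h0 I) (h1 I)) (sum_div_one_sub_le_sum_mul (h0 I) (h1 I))

theorem stmt_0 (n : ℕ) (hn : 1 ≤ n) (α : Fin n → ℝ)
    (hα : ∀ i, 0 ≤ α i ∧ α i < 1) (hsum : ∑ i, α i = 1) (I : Finset (Fin n)) :
    (1 - ∏ k, (1 - α k)) * (∑ i ∈ I, α i)
      + (∏ i ∈ I, (1 - α i))
      + (1 / 2) * (∏ k, (1 - α k)) * (∑ i ∈ I, α i / (1 - α i)) * (∑ j ∈ Iᶜ, α j)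
      ≤ 1 :=
  stmt_0_general n α hα hsum I
end

section
/- Let n ≥ 1, let β_1,…,β_n ∈ (0,1] and p_1,…,p_n ∈ [0,1] be real numbers. There exist allocation probabilities (q_S^i), i.e. a family of reals indexed by subsets S ⊆ {1,…,n} and agents i with q_S^i ∈ [0,1], q_S^i = 0 whenever i ∉ S, and Σ_{i∈S} q_S^i = 1 for every nonempty S, such that for every i, p_i = Σ_{S ⊆ {1,…,n}, i∈S} q_S^i · (∏_{j∈S∖{i}} β_j) · (∏_{j∉S} (1−β_j)), if and only if both (1) Σ_{i=1}^n p_i β_i = 1 − ∏_{i=1}^n (1−β_i), and (2) for every subset I ⊆ {1,…,n}: Σ_{i∈I} p_i β_i ≤ 1 − ∏_{i∈I}(1−β_i). -/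
/-!
Write `w S` for the probability that the set of bidders is exactly `S`. Multiplied by `β i`, the
interim condition says that agent `i` wins with ex-ante probability `∑ S, q S i * w S = p i * β i`,
so the theorem is Border's theorem for the distribution `w`.

Necessity is counting: the agents of `I` can only win at profiles meeting `I`, and at every
nonempty profile somebody wins. For sufficiency, take an allocation rule minimising the squared
distance between the targets `d i = p i * β i` and the ex-ante probabilities `x i` (the allocation
rules form a compact set). Moving mass at a profile `S` from `j` to `i ∈ S` decreases the distance
when the deficit `d i - x i` exceeds `d j - x j`; so at the minimum a profile of positive weight only
serves members of maximal deficit. If the largest deficit were positive, the profiles meeting the set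
`R` of agents attaining it would give all their weight to `R`, and their total weight would be at
most `∑ i ∈ R, x i < ∑ i ∈ R, d i`, against the inequality for `R`. So all deficits are `≤ 0`, and
they sum to `0` by the equality.
-/

open Finset

variable {ι : Type*}

structure IsAllocationRule (q : Finset ι → ι → ℝ) : Prop where
  nonneg : ∀ S i, 0 ≤ q S i
  eq_zero_of_notMem : ∀ S i, i ∉ S → q S i = 0
  sum_eq_one : ∀ S : Finset ι, S.Nonempty → ∑ i ∈ S, q S i = 1

def transfer [DecidableEq ι] (q : Finset ι → ι → ℝ) (S : Finset ι) (j i : ι) (ε : ℝ) :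
    Finset ι → ι → ℝ :=
  fun T k => q T k + if T = S then (if k = i then ε else 0) - (if k = j then ε else 0) else 0

def exAnteProb [Fintype ι] (w : Finset ι → ℝ) (q : Finset ι → ι → ℝ) (i : ι) : ℝ :=
  ∑ S, q S i * w S

def sumSqDeficit [Fintype ι] (w : Finset ι → ℝ) (d : ι → ℝ) (q : Finset ι → ι → ℝ) : ℝ :=
  ∑ i, (d i - exAnteProb w q i) ^ 2

namespace IsAllocationRule

variable {q : Finset ι → ι → ℝ}

lemma le_one (hq : IsAllocationRule q) (S : Finset ι) (i : ι) : q S i ≤ 1 := by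
  by_cases hi : i ∈ S
  · rw [← hq.sum_eq_one S ⟨i, hi⟩]
    exact single_le_sum (fun k _ => hq.nonneg S k) hi
  · rw [hq.eq_zero_of_notMem S i hi]
    exact zero_le_one

lemma transfer [DecidableEq ι] (hq : IsAllocationRule q) {S : Finset ι} {i j : ι} {ε : ℝ}
    (hi : i ∈ S) (hj : j ∈ S) (hij : i ≠ j) (hε : 0 ≤ ε) (hεq : ε ≤ q S j) :
    IsAllocationRule (transfer q S j i ε) where
  nonneg T k := by
    have := hq.nonneg T k
    unfold _root_.transfer
    split_ifs <;> simp_all; linarith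
  eq_zero_of_notMem T k hk := by
    unfold _root_.transfer
    rw [hq.eq_zero_of_notMem T k hk, zero_add]
    by_cases hT : T = S
    · subst hT
      have hki : k ≠ i := by rintro rfl; exact hk hi
      have hkj : k ≠ j := by rintro rfl; exact hk hj
      simp [hki, hkj]
    · simp [hT]
  sum_eq_one T hT := by
    unfold _root_.transfer
    rw [sum_add_distrib, hq.sum_eq_one T hT]
    by_cases hTS : T = S
    · subst hTS
      simp [sum_sub_distrib, hi, hj]
    · simp [hTS]

variable [Fintype ι]

lemma sum_univ_eq_one (hq : IsAllocationRule q) {S : Finset ι} (hS : S.Nonempty) :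
    ∑ i, q S i = 1 := by
  rw [← hq.sum_eq_one S hS]
  exact (sum_subset (subset_univ S) fun i _ hi => hq.eq_zero_of_notMem S i hi).symm

lemma sum_univ_eq_ite (hq : IsAllocationRule q) (S : Finset ι) :
    ∑ i, q S i = if S.Nonempty then 1 else 0 := by
  split_ifs with hS
  · exact hq.sum_univ_eq_one hS
  · rw [not_nonempty_iff_eq_empty] at hS
    exact sum_eq_zero fun i _ => hq.eq_zero_of_notMem S i (hS ▸ notMem_empty i)

lemma sum_exAnteProb_univ {w : Finset ι → ℝ} (hq : IsAllocationRule q) :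
    ∑ i, exAnteProb w q i = ∑ S with S.Nonempty, w S := by
  simp only [exAnteProb]
  rw [sum_comm, sum_filter]
  refine sum_congr rfl fun S _ => ?_
  rw [← sum_mul, hq.sum_univ_eq_ite]
  split_ifs <;> simp

variable [DecidableEq ι]

lemma sum_le_ite (hq : IsAllocationRule q) (S I : Finset ι) :
    ∑ i ∈ I, q S i ≤ if (S ∩ I).Nonempty then 1 else 0 := by
  split_ifs with h
  · calc ∑ i ∈ I, q S i ≤ ∑ i, q S i := sum_le_univ_sum_of_nonneg (hq.nonneg S)
      _ = 1 := hq.sum_univ_eq_one (h.mono inter_subset_left)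
  · refine (sum_eq_zero fun i hi => hq.eq_zero_of_notMem S i fun hiS => h ?_).le
    exact ⟨i, mem_inter.2 ⟨hiS, hi⟩⟩

lemma sum_exAnteProb_le {w : Finset ι → ℝ} (hq : IsAllocationRule q) (hw : ∀ S, 0 ≤ w S)
    (I : Finset ι) : ∑ i ∈ I, exAnteProb w q i ≤ ∑ S with (S ∩ I).Nonempty, w S := by
  simp only [exAnteProb]
  rw [sum_comm, sum_filter]
  refine sum_le_sum fun S _ => ?_
  rw [← sum_mul]
  calc (∑ i ∈ I, q S i) * w S ≤ (if (S ∩ I).Nonempty then 1 else 0) * w S :=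
        mul_le_mul_of_nonneg_right (hq.sum_le_ite S I) (hw S)
    _ = if (S ∩ I).Nonempty then w S else 0 := by split_ifs <;> simp

end IsAllocationRule

lemma isCompact_setOf_isAllocationRule [Fintype ι] :
    IsCompact {q : Finset ι → ι → ℝ | IsAllocationRule q} := by
  have hset : {q : Finset ι → ι → ℝ | IsAllocationRule q} =
      (⋂ S, ⋂ i, {q | 0 ≤ q S i}) ∩ (⋂ S, ⋂ i, ⋂ (_ : i ∉ S), {q | q S i = 0}) ∩
        ⋂ S, ⋂ (_ : S.Nonempty), {q | ∑ i ∈ S, q S i = 1} := by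
    ext q
    simp only [Set.mem_ofPred_eq, Set.mem_inter_iff, Set.mem_iInter]
    exact ⟨fun h => ⟨⟨h.1, h.2⟩, h.3⟩, fun h => ⟨h.1.1, h.1.2, h.2⟩⟩
  refine IsCompact.of_isClosed_subset
    (isCompact_univ_pi fun _ => isCompact_univ_pi fun _ => isCompact_Icc (a := (0 : ℝ)) (b := 1))
    ?_ fun q hq S _ i _ => ⟨hq.nonneg S i, hq.le_one S i⟩
  rw [hset]
  refine .inter (.inter ?_ ?_) ?_
  · exact isClosed_iInter fun S => isClosed_iInter fun i =>
      isClosed_le continuous_const (by fun_prop)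
  · exact isClosed_iInter fun S => isClosed_iInter fun i => isClosed_iInter fun _ =>
      isClosed_eq (by fun_prop) continuous_const
  · exact isClosed_iInter fun S => isClosed_iInter fun _ =>
      isClosed_eq (by fun_prop) continuous_const

lemma exists_isAllocationRule [DecidableEq ι] : ∃ q : Finset ι → ι → ℝ, IsAllocationRule q :=
  ⟨fun S i => if i ∈ S then (#S : ℝ)⁻¹ else 0,
    ⟨fun S i => by positivity, fun S i hi => if_neg hi, fun S hS => by
      simp [sum_ite_mem, hS.card_pos.ne']⟩⟩

section Border

variable [Fintype ι] [DecidableEq ι] {w : Finset ι → ℝ} {d : ι → ℝ} {q : Finset ι → ι → ℝ}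

lemma exAnteProb_transfer (S : Finset ι) (j i : ι) (ε : ℝ) (k : ι) :
    exAnteProb w (transfer q S j i ε) k =
      exAnteProb w q k + ((if k = i then ε else 0) - (if k = j then ε else 0)) * w S := by
  simp only [exAnteProb, transfer, add_mul, sum_add_distrib, ite_mul, zero_mul, sum_ite_eq',
    mem_univ, if_true]

lemma sumSqDeficit_transfer {S : Finset ι} {i j : ι} (hij : i ≠ j) (ε : ℝ) :
    sumSqDeficit w d (transfer q S j i ε) = sumSqDeficit w d q -
      2 * (ε * w S) * ((d i - exAnteProb w q i) - (d j - exAnteProb w q j) - ε * w S) := by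
  have hdiff : sumSqDeficit w d (transfer q S j i ε) - sumSqDeficit w d q =
      ((d i - exAnteProb w q i - ε * w S) ^ 2 - (d i - exAnteProb w q i) ^ 2) +
        ((d j - exAnteProb w q j + ε * w S) ^ 2 - (d j - exAnteProb w q j) ^ 2) := by
    rw [sumSqDeficit, sumSqDeficit, ← sum_sub_distrib, Fintype.sum_eq_add i j hij]
    · simp only [exAnteProb_transfer, if_true, if_neg hij, if_neg hij.symm]
      ring
    · rintro k ⟨hki, hkj⟩
      simp [exAnteProb_transfer, hki, hkj]
  linear_combination hdiff

lemma IsAllocationRule.mul_eq_zero_of_isMinOn (hq : IsAllocationRule q) (hw : ∀ S, 0 ≤ w S)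
    (hmin : IsMinOn (sumSqDeficit w d) {q | IsAllocationRule q} q) {S : Finset ι} {i j : ι}
    (hi : i ∈ S) (hlt : d j - exAnteProb w q j < d i - exAnteProb w q i) : q S j * w S = 0 := by
  by_contra hne
  have hqj : 0 < q S j := (hq.nonneg S j).lt_of_ne fun h => hne (by rw [← h, zero_mul])
  have hwS : 0 < w S := (hw S).lt_of_ne fun h => hne (by rw [← h, mul_zero])
  have hj : j ∈ S := by
    by_contra hj
    exact hqj.ne' (hq.eq_zero_of_notMem S j hj)
  have hij : i ≠ j := by
    rintro rfl
    exact lt_irrefl _ hlt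
  set gap := (d i - exAnteProb w q i) - (d j - exAnteProb w q j)
  set ε := min (q S j) (gap / (2 * w S))
  have hε : 0 < ε := lt_min hqj (div_pos (by linarith) (by positivity))
  have hεw : ε * w S ≤ gap / 2 := by
    calc ε * w S ≤ gap / (2 * w S) * w S := mul_le_mul_of_nonneg_right (min_le_right _ _) hwS.le
      _ = gap / 2 := by field_simp
  have hle := hmin (hq.transfer hi hj hij hε.le (min_le_left _ _))
  simp only [Set.mem_ofPred_eq, sumSqDeficit_transfer hij] at hle
  nlinarith [mul_pos hε hwS]

lemma IsAllocationRule.exAnteProb_eq_of_isMinOn (hq : IsAllocationRule q) (hw : ∀ S, 0 ≤ w S)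
    (hmin : IsMinOn (sumSqDeficit w d) {q | IsAllocationRule q} q)
    (hHall : ∀ I : Finset ι, ∑ i ∈ I, d i ≤ ∑ S with (S ∩ I).Nonempty, w S)
    (htot : ∑ i, d i = ∑ S with S.Nonempty, w S) (i : ι) : exAnteProb w q i = d i := by
  set δ : ι → ℝ := fun i => d i - exAnteProb w q i with hδ
  have hsum : ∑ i, δ i = 0 := by
    rw [hδ, sum_sub_distrib, hq.sum_exAnteProb_univ, htot, sub_self]
  suffices hle : ∀ i, δ i ≤ 0 by
    have := (sum_eq_zero_iff_of_nonpos fun i _ => hle i).1 hsum i (mem_univ i)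
    linarith
  by_contra! ⟨i₀, hi₀⟩
  have : Nonempty ι := ⟨i₀⟩
  obtain ⟨k, hk⟩ := Finite.exists_max δ
  set R := univ.filter fun j => δ j = δ k
  have hR : R.Nonempty := ⟨k, by simp [R]⟩
  have hsupport : ∀ S, (S ∩ R).Nonempty → w S = ∑ j ∈ R, q S j * w S := by
    rintro S ⟨i, hi⟩
    simp only [mem_inter, R, mem_filter, mem_univ, true_and] at hi
    rw [sum_subset (subset_univ R), ← sum_mul, hq.sum_univ_eq_one ⟨i, hi.1⟩, one_mul]
    intro j _ hj
    simp only [R, mem_filter, mem_univ, true_and] at hj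
    exact hq.mul_eq_zero_of_isMinOn hw hmin hi.1
      (show δ j < δ i by rw [hi.2]; exact (hk j).lt_of_ne hj)
  have hdeficit : ∀ j ∈ R, exAnteProb w q j < d j := fun j hj => by
    simp only [R, mem_filter, mem_univ, true_and] at hj
    linarith [hk i₀, show δ j = d j - exAnteProb w q j from rfl]
  refine lt_irrefl (∑ S with (S ∩ R).Nonempty, w S) ?_
  calc ∑ S with (S ∩ R).Nonempty, w S
        = ∑ S with (S ∩ R).Nonempty, ∑ j ∈ R, q S j * w S :=
          sum_congr rfl fun S hS => hsupport S (mem_filter.1 hS).2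
    _ ≤ ∑ S, ∑ j ∈ R, q S j * w S :=
          sum_le_sum_of_subset_of_nonneg (filter_subset _ _) fun S _ _ =>
            sum_nonneg fun j _ => mul_nonneg (hq.nonneg S j) (hw S)
    _ = ∑ j ∈ R, exAnteProb w q j := sum_comm
    _ < ∑ j ∈ R, d j := sum_lt_sum_of_nonempty hR hdeficit
    _ ≤ _ := hHall R

theorem exists_isAllocationRule_exAnteProb_eq (hw : ∀ S, 0 ≤ w S)
    (hHall : ∀ I : Finset ι, ∑ i ∈ I, d i ≤ ∑ S with (S ∩ I).Nonempty, w S)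
    (htot : ∑ i, d i = ∑ S with S.Nonempty, w S) :
    ∃ q, IsAllocationRule q ∧ ∀ i, exAnteProb w q i = d i := by
  obtain ⟨q, hq, hmin⟩ := isCompact_setOf_isAllocationRule.exists_isMinOn
    exists_isAllocationRule (f := sumSqDeficit w d) (by unfold sumSqDeficit exAnteProb; fun_prop)
  exact ⟨q, hq, hq.exAnteProb_eq_of_isMinOn hw hmin hHall htot⟩

end Border

section BidderSets

variable [Fintype ι] [DecidableEq ι] {β : ι → ℝ}

def bidderSetProb (β : ι → ℝ) (S : Finset ι) : ℝ := (∏ j ∈ S, β j) * ∏ j ∈ Sᶜ, (1 - β j)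

lemma bidderSetProb_nonneg (h0 : ∀ i, 0 ≤ β i) (h1 : ∀ i, β i ≤ 1) (S : Finset ι) :
    0 ≤ bidderSetProb β S :=
  mul_nonneg (prod_nonneg fun j _ => h0 j) (prod_nonneg fun j _ => sub_nonneg.2 (h1 j))

lemma sum_bidderSetProb_disjoint (I : Finset ι) :
    ∑ S with Disjoint S I, bidderSetProb β S = ∏ i ∈ I, (1 - β i) := by
  have hfactor : ∀ i, ((if i ∉ I then β i else 0) + (1 - β i)) = if i ∈ I then 1 - β i else 1 :=
    fun i => by split_ifs <;> simp_all
  have hexpand := prod_add (fun i => if i ∉ I then β i else 0) (fun i => 1 - β i) univ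
  simp only [hfactor, prod_ite_mem, univ_inter, powerset_univ, ← compl_eq_univ_sdiff,
    prod_ite_zero, ite_mul, zero_mul] at hexpand
  rw [hexpand, sum_filter]
  simp only [bidderSetProb, disjoint_left]

lemma sum_bidderSetProb_inter_nonempty (I : Finset ι) :
    ∑ S with (S ∩ I).Nonempty, bidderSetProb β S = 1 - ∏ i ∈ I, (1 - β i) := by
  have htotal : ∑ S, bidderSetProb β S = 1 := by
    simpa using sum_bidderSetProb_disjoint (β := β) ∅
  have hsplit := sum_filter_add_sum_filter_not univ (fun S => (S ∩ I).Nonempty) (bidderSetProb β)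
  simp only [not_nonempty_iff_eq_empty, ← disjoint_iff_inter_eq_empty,
    sum_bidderSetProb_disjoint] at hsplit
  linarith

lemma sum_interim_mul_eq_exAnteProb {q : Finset ι → ι → ℝ} (hq : ∀ S i, i ∉ S → q S i = 0)
    (i : ι) :
    (∑ S with i ∈ S, q S i * (∏ j ∈ S.erase i, β j) * ∏ j ∈ Sᶜ, (1 - β j)) * β i =
      exAnteProb (bidderSetProb β) q i := by
  rw [sum_mul, sum_filter, exAnteProb]
  refine sum_congr rfl fun S _ => ?_
  split_ifs with hi
  · rw [bidderSetProb, ← mul_prod_erase S β hi]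
    ring
  · rw [hq S i hi, zero_mul]

end BidderSets

theorem stmt_1_general (n : ℕ) (β p : Fin n → ℝ)
    (hβ : ∀ i, 0 < β i ∧ β i ≤ 1) :
    (∃ q : Finset (Fin n) → Fin n → ℝ,
      (∀ S i, 0 ≤ q S i ∧ q S i ≤ 1) ∧
      (∀ S i, i ∉ S → q S i = 0) ∧
      (∀ S : Finset (Fin n), S.Nonempty → ∑ i ∈ S, q S i = 1) ∧
      (∀ i, p i = ∑ S ∈ Finset.univ.filter (fun S : Finset (Fin n) => i ∈ S),
        q S i * (∏ j ∈ S.erase i, β j) * (∏ j ∈ Sᶜ, (1 - β j)))) ↔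
    ((∑ i, p i * β i = 1 - ∏ i, (1 - β i)) ∧
      ∀ I : Finset (Fin n), ∑ i ∈ I, p i * β i ≤ 1 - ∏ i ∈ I, (1 - β i)) := by
  have hw := bidderSetProb_nonneg (fun i => (hβ i).1.le) (fun i => (hβ i).2)
  have hnonempty : ∑ S with S.Nonempty, bidderSetProb β S = 1 - ∏ i, (1 - β i) := by
    simpa using sum_bidderSetProb_inter_nonempty (β := β) univ
  have hinterim : ∀ q : Finset (Fin n) → Fin n → ℝ, IsAllocationRule q →
      ((∀ i, p i = ∑ S with i ∈ S, q S i * (∏ j ∈ S.erase i, β j) * ∏ j ∈ Sᶜ, (1 - β j)) ↔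
        ∀ i, exAnteProb (bidderSetProb β) q i = p i * β i) := fun q hq => forall_congr' fun i => by
    rw [← sum_interim_mul_eq_exAnteProb hq.eq_zero_of_notMem, mul_left_inj' (hβ i).1.ne', eq_comm]
  constructor
  · rintro ⟨q, hq01, hq0, hq1, hp⟩
    have hq : IsAllocationRule q := ⟨fun S i => (hq01 S i).1, hq0, hq1⟩
    have hd := (hinterim q hq).1 hp
    refine ⟨?_, fun I => ?_⟩
    · simpa only [hd, hnonempty] using hq.sum_exAnteProb_univ (w := bidderSetProb β)
    · simpa only [hd, sum_bidderSetProb_inter_nonempty] using hq.sum_exAnteProb_le hw I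
  · rintro ⟨htot, hHall⟩
    obtain ⟨q, hq, hd⟩ := exists_isAllocationRule_exAnteProb_eq hw
      (fun I => (sum_bidderSetProb_inter_nonempty I).symm ▸ hHall I) (hnonempty.symm ▸ htot)
    exact ⟨q, fun S i => ⟨hq.nonneg S i, hq.le_one S i⟩, hq.eq_zero_of_notMem, hq.sum_eq_one,
      (hinterim q hq).2 hd⟩

theorem stmt_1 (n : ℕ) (hn : 1 ≤ n) (β p : Fin n → ℝ)
    (hβ : ∀ i, 0 < β i ∧ β i ≤ 1) (hp : ∀ i, 0 ≤ p i ∧ p i ≤ 1) :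
    (∃ q : Finset (Fin n) → Fin n → ℝ,
      (∀ S i, 0 ≤ q S i ∧ q S i ≤ 1) ∧
      (∀ S i, i ∉ S → q S i = 0) ∧
      (∀ S : Finset (Fin n), S.Nonempty → ∑ i ∈ S, q S i = 1) ∧
      (∀ i, p i = ∑ S ∈ Finset.univ.filter (fun S : Finset (Fin n) => i ∈ S),
        q S i * (∏ j ∈ S.erase i, β j) * (∏ j ∈ Sᶜ, (1 - β j)))) ↔
    ((∑ i, p i * β i = 1 - ∏ i, (1 - β i)) ∧
      ∀ I : Finset (Fin n), ∑ i ∈ I, p i * β i ≤ 1 - ∏ i ∈ I, (1 - β i)) :=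
  stmt_1_general n β p hβ
end

section
/- Let n ≥ 2 and let α_1,…,α_n ∈ (0,1) be real numbers with Σ_{i=1}^n α_i = 1, and set p_i = 1 − ∏_{j=1}^n (1−α_j) for every i. There exist allocation probabilities (q_S^i) (a family with q_S^i ∈ [0,1], q_S^i = 0 when i ∉ S, Σ_{i∈S} q_S^i = 1 for every nonempty S) that induce the interim allocation probabilities p_i = Σ_{S∋i} q_S^i ∏_{j∈S∖{i}} α_j ∏_{j∉S}(1−α_j) and satisfy q_{{i,j}}^j ≤ (1+α_i)/2 for every two-element subset {i,j}, if and only if for every subset I ⊆ {1,…,n}: (1 − ∏_{k=1}^n (1−α_k))·Σ_{i∈I} α_i + ∏_{i∈I}(1−α_i) + (1/2)·∏_{k=1}^n (1−α_k)·(Σ_{i∈I} α_i/(1−α_i))·(Σ_{j∉I} α_j) ≤ 1. -/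
/-!
Weight each bidder set `S` by its probability `w S = ∏_{j ∈ S} α j * ∏_{j ∉ S} (1 - α j)`.
Then `∑_{i ∈ I} α i * p i` is the probability that the item goes to a bidder of `I`. Split over
the bidder sets, the contribution of `S` is at most `w S` when `S` meets `I`, and at most
`(1 + α i) / 2 * w {i, j}` on a doubleton `{i, j}` with `i ∉ I`, `j ∈ I`. Summing these bounds
gives the inequality.

Conversely, an allocation with the required properties can be written down explicitly. Draw a
bidder `m` with probability `α m` and a direction uniformly at random. Scan the bidders
cyclically from `m` in that direction, with `m` itself last, and give the item to the first
one present. For a fixed direction, the set of bidders scanned before `i` grows by one as `m`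
recedes from `i`, so the interim probability of `i` telescopes to `1 - ∏ j, (1 - α j)`. The two
directions order any two bidders other than `m` oppositely, so `j` beats `i` on `{i, j}` in
both directions only if `m = i`. This gives the bound `(1 + α i) / 2`.
-/

open Finset

section Allocation
variable {ι : Type*}

structure IsAllocation (q : Finset ι → ι → ℝ) : Prop where
  nonneg_and_le_one : ∀ S i, 0 ≤ q S i ∧ q S i ≤ 1
  eq_zero_of_notMem : ∀ S i, i ∉ S → q S i = 0
  sum_eq_one : ∀ S : Finset ι, S.Nonempty → ∑ i ∈ S, q S i = 1

theorem isAllocation_sum_mul {T : Type*} [Fintype T] {w : T → ℝ} (hw0 : ∀ t, 0 ≤ w t)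
    (hw1 : ∑ t, w t = 1) {Q : T → Finset ι → ι → ℝ} (hQ : ∀ t, IsAllocation (Q t)) :
    IsAllocation (fun S x => ∑ t, w t * Q t S x) where
  nonneg_and_le_one S x := by
    refine ⟨sum_nonneg fun t _ => mul_nonneg (hw0 t) ((hQ t).nonneg_and_le_one S x).1, ?_⟩
    calc ∑ t, w t * Q t S x ≤ ∑ t, w t * 1 :=
          sum_le_sum fun t _ =>
            mul_le_mul_of_nonneg_left ((hQ t).nonneg_and_le_one S x).2 (hw0 t)
      _ = 1 := by simp [hw1]
  eq_zero_of_notMem S x hx :=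
    sum_eq_zero fun t _ => by rw [(hQ t).eq_zero_of_notMem S x hx, mul_zero]
  sum_eq_one S hS := by
    rw [sum_comm]
    simp only [← mul_sum, (hQ _).sum_eq_one S hS, mul_one, hw1]

variable {q : Finset ι → ι → ℝ}

theorem IsAllocation.sum_le_one [DecidableEq ι] (hq : IsAllocation q) (S I : Finset ι) :
    ∑ i ∈ I, q S i ≤ 1 := by
  rcases S.eq_empty_or_nonempty with rfl | hS
  · simp [hq.eq_zero_of_notMem ∅]
  calc ∑ i ∈ I, q S i = ∑ i ∈ I with i ∈ S, q S i :=
        (sum_filter_of_ne fun i _ h => by_contra fun hi => h (hq.eq_zero_of_notMem S i hi)).symm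
    _ ≤ ∑ i ∈ S, q S i :=
        sum_le_sum_of_subset_of_nonneg (fun i hi => (mem_filter.1 hi).2)
          fun i _ _ => (hq.nonneg_and_le_one S i).1
    _ = 1 := hq.sum_eq_one S hS

theorem IsAllocation.sum_eq_zero_of_disjoint (hq : IsAllocation q) {S I : Finset ι}
    (h : Disjoint S I) : ∑ i ∈ I, q S i = 0 :=
  sum_eq_zero fun i hi => hq.eq_zero_of_notMem S i (disjoint_right.1 h hi)

theorem IsAllocation.sum_pair [DecidableEq ι] (hq : IsAllocation q) {I : Finset ι} {i j : ι}
    (hi : i ∉ I) (hj : j ∈ I) : ∑ x ∈ I, q {i, j} x = q {i, j} j :=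
  sum_eq_single j (fun x hx hxj => hq.eq_zero_of_notMem _ _ <| by
    simp only [mem_insert, mem_singleton, hxj, or_false]
    exact fun h => hi (h ▸ hx)) (absurd hj)

end Allocation

section BidderWeight
variable {ι : Type*} [Fintype ι] [DecidableEq ι]

/-- The probability that the bidders present are exactly `S`, when each `j` is present
independently with probability `α j`. -/
def bidderWeight (α : ι → ℝ) (S : Finset ι) : ℝ :=
  (∏ j ∈ S, α j) * ∏ j ∈ Sᶜ, (1 - α j)

def interimProb (α : ι → ℝ) (q : Finset ι → ι → ℝ) (i : ι) : ℝ :=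
  ∑ S ∈ univ.filter (fun S : Finset ι => i ∈ S),
    q S i * (∏ j ∈ S.erase i, α j) * ∏ j ∈ Sᶜ, (1 - α j)

variable (α : ι → ℝ)

theorem bidderWeight_nonneg (h0 : ∀ i, 0 ≤ α i) (h1 : ∀ i, α i ≤ 1) (S : Finset ι) :
    0 ≤ bidderWeight α S :=
  mul_nonneg (prod_nonneg fun j _ => h0 j) (prod_nonneg fun j _ => sub_nonneg.2 (h1 j))

/-- Expand `∏ j, (f j + g j)` over subsets, where `f` vanishes on `B` and `g` on `A`. -/
theorem sum_bidderWeight_filter {A B : Finset ι} (hAB : Disjoint A B) :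
    ∑ S with A ⊆ S ∧ Disjoint S B, bidderWeight α S
      = (∏ j ∈ A, α j) * ∏ j ∈ B, (1 - α j) := by
  have key := prod_add (fun j => if j ∉ B then α j else 0)
    (fun j => if j ∉ A then 1 - α j else 0) univ
  have hsplit : ∀ j, ((if j ∉ B then α j else 0) + if j ∉ A then 1 - α j else 0)
      = (if j ∈ A then α j else 1) * (if j ∈ B then 1 - α j else 1) := by
    intro j
    by_cases hA : j ∈ A <;> by_cases hB : j ∈ B
    · exact absurd hB (disjoint_left.1 hAB hA)
    all_goals simp [hA, hB]
  simp only [hsplit, prod_mul_distrib, prod_ite_mem, univ_inter, powerset_univ] at key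
  rw [key, sum_filter]
  refine sum_congr rfl fun S _ => ?_
  rw [prod_ite_zero, prod_ite_zero, ite_zero_mul_ite_zero, ← compl_eq_univ_sdiff]
  congr 1
  simp only [mem_compl, not_imp_not, disjoint_left, subset_iff]
  exact propext and_comm

theorem sum_bidderWeight : ∑ S, bidderWeight α S = 1 := by
  simpa using sum_bidderWeight_filter α (disjoint_empty_left (∅ : Finset ι))

theorem sum_bidderWeight_filter_not_disjoint (I : Finset ι) :
    ∑ S with ¬ Disjoint S I, bidderWeight α S = 1 - ∏ i ∈ I, (1 - α i) := by
  have hdisj := sum_bidderWeight_filter α (disjoint_empty_left I)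
  simp only [empty_subset, true_and, prod_empty, one_mul] at hdisj
  have htotal := sum_bidderWeight α
  rw [← sum_filter_add_sum_filter_not univ (Disjoint · I), hdisj] at htotal
  linarith

theorem mul_interimProb {q : Finset ι → ι → ℝ} {i : ι} (hq : ∀ S, i ∉ S → q S i = 0) :
    α i * interimProb α q i = ∑ S, q S i * bidderWeight α S := by
  rw [interimProb, mul_sum, ← sum_filter_of_ne (s := univ) (p := fun S => i ∈ S)
    fun S _ h => by_contra fun hi => h (by simp [hq S hi])]
  refine sum_congr rfl fun S hS => ?_
  rw [bidderWeight, ← mul_prod_erase S α (mem_filter.1 hS).2]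
  ring

theorem interimProb_sum_mul {T : Type*} [Fintype T] (w : T → ℝ) (Q : T → Finset ι → ι → ℝ)
    (i : ι) :
    interimProb α (fun S x => ∑ t, w t * Q t S x) i = ∑ t, w t * interimProb α (Q t) i := by
  simp only [interimProb, mul_sum, sum_mul]
  rw [sum_comm]
  exact sum_congr rfl fun _ _ => sum_congr rfl fun _ _ => by ring

end BidderWeight

section Border
variable {ι : Type*} [Fintype ι] [DecidableEq ι] {α : ι → ℝ} {q : Finset ι → ι → ℝ}

theorem IsAllocation.sum_mul_interimProb (hq : IsAllocation q) (I : Finset ι) :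
    ∑ i ∈ I, α i * interimProb α q i = ∑ S, (∑ i ∈ I, q S i) * bidderWeight α S := by
  rw [sum_congr rfl fun i _ => mul_interimProb α fun S => hq.eq_zero_of_notMem S i]
  simp only [sum_mul]
  exact sum_comm

theorem injOn_pair_compl_product (I : Finset ι) :
    Set.InjOn (fun p : ι × ι => ({p.1, p.2} : Finset ι)) (Iᶜ ×ˢ I : Finset (ι × ι)) := by
  rintro ⟨a, b⟩ hab ⟨c, d⟩ hcd h
  simp only [coe_product, Set.mem_prod, mem_coe, mem_compl] at hab hcd h
  have hc : c ∈ ({a, b} : Finset ι) := h ▸ by simp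
  have hd : d ∈ ({a, b} : Finset ι) := h ▸ by simp
  simp only [mem_insert, mem_singleton] at hc hd
  grind

theorem sum_compl_product_bidderWeight_pair (h1 : ∀ i, α i ≠ 1) (I : Finset ι) :
    ∑ p ∈ Iᶜ ×ˢ I, (1 - α p.1) / 2 * bidderWeight α {p.1, p.2}
      = 1 / 2 * (∏ k, (1 - α k)) * (∑ i ∈ I, α i / (1 - α i)) * ∑ j ∈ Iᶜ, α j := by
  rw [sum_product_right, mul_assoc, sum_mul_sum, mul_sum]
  refine sum_congr rfl fun j hj => ?_
  rw [mul_sum]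
  refine sum_congr rfl fun i hi => ?_
  have hij : i ≠ j := fun h => mem_compl.1 hi (h ▸ hj)
  have hj1 : 1 - α j ≠ 0 := sub_ne_zero.2 (h1 j).symm
  rw [bidderWeight, prod_pair hij, ← prod_mul_prod_compl {i, j} (fun k => 1 - α k),
    prod_pair hij]
  field_simp

theorem IsAllocation.sum_sum_mul_bidderWeight_le (hq : IsAllocation q) (h0 : ∀ i, 0 ≤ α i)
    (h1 : ∀ i, α i ≤ 1) (hcap : ∀ i j, i ≠ j → q {i, j} j ≤ (1 + α i) / 2) (I : Finset ι) :
    ∑ S, (∑ i ∈ I, q S i) * bidderWeight α S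
      ≤ 1 - ∏ i ∈ I, (1 - α i)
        - ∑ p ∈ Iᶜ ×ˢ I, (1 - α p.1) / 2 * bidderWeight α {p.1, p.2} := by
  set E : Finset (Finset ι) := {S | ¬ Disjoint S I}
  set D := (Iᶜ ×ˢ I).image fun p : ι × ι => ({p.1, p.2} : Finset ι)
  have hw := bidderWeight_nonneg α h0 h1
  have hDE : D ⊆ E := by
    simp only [D, E, subset_iff, mem_image, mem_product, mem_compl, mem_filter, mem_univ,
      true_and]
    rintro _ ⟨⟨i, j⟩, ⟨-, hj⟩, rfl⟩
    exact not_disjoint_iff.2 ⟨j, by simp, hj⟩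
  have hpairs : ∑ S ∈ D, (∑ i ∈ I, q S i) * bidderWeight α S
      ≤ ∑ S ∈ D, bidderWeight α S
        - ∑ p ∈ Iᶜ ×ˢ I, (1 - α p.1) / 2 * bidderWeight α {p.1, p.2} := by
    rw [sum_image (injOn_pair_compl_product I), sum_image (injOn_pair_compl_product I),
      ← sum_sub_distrib]
    refine sum_le_sum fun p hp => ?_
    obtain ⟨hi, hj⟩ := mem_product.1 hp
    have hij : p.1 ≠ p.2 := fun h => mem_compl.1 hi (h ▸ hj)
    rw [hq.sum_pair (mem_compl.1 hi) hj]
    have := mul_le_mul_of_nonneg_right (hcap p.1 p.2 hij) (hw {p.1, p.2})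
    linarith
  calc ∑ S, (∑ i ∈ I, q S i) * bidderWeight α S
      = ∑ S ∈ E, (∑ i ∈ I, q S i) * bidderWeight α S :=
        (sum_filter_of_ne (p := fun S => ¬ Disjoint S I) fun S _ h hS =>
          h (by rw [hq.sum_eq_zero_of_disjoint hS, zero_mul])).symm
    _ = ∑ S ∈ E \ D, (∑ i ∈ I, q S i) * bidderWeight α S
          + ∑ S ∈ D, (∑ i ∈ I, q S i) * bidderWeight α S := (sum_sdiff hDE).symm
    _ ≤ ∑ S ∈ E \ D, bidderWeight α S + (∑ S ∈ D, bidderWeight α S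
          - ∑ p ∈ Iᶜ ×ˢ I, (1 - α p.1) / 2 * bidderWeight α {p.1, p.2}) :=
        add_le_add (sum_le_sum fun S _ => mul_le_of_le_one_left (hw S) (hq.sum_le_one S I))
          hpairs
    _ = _ := by
        rw [← sum_bidderWeight_filter_not_disjoint α I, ← sum_sdiff hDE]
        ring

theorem IsAllocation.sum_mul_interimProb_add_le_one (hq : IsAllocation q)
    (h0 : ∀ i, 0 ≤ α i) (h1 : ∀ i, α i < 1)
    (hcap : ∀ i j, i ≠ j → q {i, j} j ≤ (1 + α i) / 2) (I : Finset ι) :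
    ∑ i ∈ I, α i * interimProb α q i + ∏ i ∈ I, (1 - α i)
      + 1 / 2 * (∏ k, (1 - α k)) * (∑ i ∈ I, α i / (1 - α i)) * ∑ j ∈ Iᶜ, α j ≤ 1 := by
  rw [hq.sum_mul_interimProb, ← sum_compl_product_bidderWeight_pair (fun i => (h1 i).ne) I]
  linarith [hq.sum_sum_mul_bidderWeight_le h0 (fun i => (h1 i).le) hcap I]

end Border

section Priority
variable {ι β : Type*} [Fintype ι] [DecidableEq ι] [LinearOrder β]

def priorityRule (k : ι → β) (S : Finset ι) (i : ι) : ℝ :=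
  if i ∈ S ∧ ∀ j ∈ S, k i ≤ k j then 1 else 0

theorem isAllocation_priorityRule {k : ι → β} (hk : Function.Injective k) :
    IsAllocation (priorityRule k) where
  nonneg_and_le_one S i := by unfold priorityRule; split_ifs <;> norm_num
  eq_zero_of_notMem S i hi := if_neg fun h => hi h.1
  sum_eq_one S hS := by
    obtain ⟨x, hx, hmin⟩ := S.exists_min_image k hS
    have hwin : ∀ i ∈ S, (i ∈ S ∧ ∀ j ∈ S, k i ≤ k j) ↔ i = x := fun i hi =>
      ⟨fun h => hk (le_antisymm (h.2 x hx) (hmin i hi)), fun h => h ▸ ⟨hx, hmin⟩⟩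
    unfold priorityRule
    rw [sum_congr rfl fun i hi => if_congr (hwin i hi) rfl rfl, sum_ite_eq' S x, if_pos hx]

theorem interimProb_priorityRule (α : ι → ℝ) (k : ι → β) {i : ι} (hi : α i ≠ 0) :
    interimProb α (priorityRule k) i = ∏ j with k j < k i, (1 - α j) := by
  apply mul_left_cancel₀ hi
  have hdisj : Disjoint {i} ({j | k j < k i} : Finset ι) := by simp
  rw [mul_interimProb α fun S h => if_neg fun h' => h h'.1,
    ← prod_singleton α i, ← sum_bidderWeight_filter α hdisj, sum_filter]
  refine sum_congr rfl fun S _ => ?_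
  rw [priorityRule, ite_mul, one_mul, zero_mul]
  congr 1
  simp [disjoint_left]

end Priority

theorem sum_mul_prod_filter_lt_of_equiv {ι κ R : Type*} [Fintype ι] [Fintype κ]
    [LinearOrder κ] [CommRing R] (e : ι ≃ κ) (a : ι → R) :
    ∑ m, a m * ∏ j with e j < e m, (1 - a j) = 1 - ∏ j, (1 - a j) := by
  classical
  have h := prod_one_sub_ordered univ (fun v => a (e.symm v))
  rw [e.symm.prod_comp (fun j => 1 - a j)] at h
  rw [h, sub_sub_cancel, ← e.symm.sum_comp]
  refine sum_congr rfl fun v _ => congrArg _ ?_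
  exact prod_nbij' e e.symm (by simp) (by simp) (by simp) (by simp) (by simp)

namespace Fin
variable {n : ℕ}

theorem sub_sub_one_lt_iff {u v : Fin (n + 1)} : v - u - 1 < v ↔ u < v := by
  rcases n with _ | n
  · simp [fin_one_eq_zero u, fin_one_eq_zero v]
  · fin_omega

theorem not_sub_sub_le_and_sub_sub_le {m i j : Fin (n + 1)} (hmi : m ≠ i) (hij : i ≠ j) :
    ¬ (j - m - 1 ≤ i - m - 1 ∧ m - 1 - j ≤ m - 1 - i) := by
  rcases n with _ | n
  · exact absurd (fin_one_eq_zero i ▸ (fin_one_eq_zero j).symm) hij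
  · fin_omega

end Fin

section Cyclic
open Fin.CommRing
variable {n : ℕ}

/-- The position of `x` when the bidders are scanned cyclically from `m + 1` upwards (`true`)
or from `m - 1` downwards (`false`); in both scans `m` comes last. -/
def cyclicKey (m : Fin (n + 1)) : Bool → Fin (n + 1) → Fin (n + 1)
  | true, x => x - m - 1
  | false, x => m - 1 - x

theorem cyclicKey_injective (m : Fin (n + 1)) (b : Bool) :
    Function.Injective (cyclicKey m b) := by
  cases b <;> intro x y h <;> simpa [cyclicKey] using h

/-- Rank the bidders by their distance from `i` against the direction of the scan: the bidders
scanned before `i` when the scan starts after `m` are exactly those ranked below `m`. -/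
theorem sum_mul_prod_cyclicKey (α : Fin (n + 1) → ℝ) (i : Fin (n + 1)) (b : Bool) :
    ∑ m, α m * ∏ j with cyclicKey m b j < cyclicKey m b i, (1 - α j)
      = 1 - ∏ j, (1 - α j) := by
  cases b
  · rw [← sum_mul_prod_filter_lt_of_equiv (Equiv.subRight (i + 1)) α]
    refine sum_congr rfl fun m _ => ?_
    congr 2
    ext j
    have hj : m - 1 - j = (m - (i + 1)) - (j - (i + 1)) - 1 := by ring
    have hi : m - 1 - i = m - (i + 1) := by ring
    simp only [mem_filter, mem_univ, true_and, cyclicKey, Equiv.subRight_apply, hj, hi,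
      Fin.sub_sub_one_lt_iff]
  · rw [← sum_mul_prod_filter_lt_of_equiv (Equiv.subLeft (i - 1)) α]
    refine sum_congr rfl fun m _ => ?_
    congr 2
    ext j
    have hj : j - m - 1 = (i - 1 - m) - (i - 1 - j) - 1 := by ring
    have hi : i - m - 1 = i - 1 - m := by ring
    simp only [mem_filter, mem_univ, true_and, cyclicKey, Equiv.subLeft_apply, hj, hi,
      Fin.sub_sub_one_lt_iff]

theorem priorityRule_cyclicKey_pair_add_le {i j : Fin (n + 1)} (hij : i ≠ j)
    (m : Fin (n + 1)) :
    priorityRule (cyclicKey m true) {i, j} j + priorityRule (cyclicKey m false) {i, j} j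
      ≤ 1 + if m = i then 1 else 0 := by
  unfold priorityRule
  split_ifs with hfwd hbwd hmi <;> norm_num
  exact Fin.not_sub_sub_le_and_sub_sub_le hmi hij ⟨hfwd.2 i (by simp), hbwd.2 i (by simp)⟩

noncomputable def cyclicMixture (α : Fin (n + 1) → ℝ) :
    Finset (Fin (n + 1)) → Fin (n + 1) → ℝ :=
  fun S x => ∑ t : Fin (n + 1) × Bool, α t.1 / 2 * priorityRule (cyclicKey t.1 t.2) S x

variable {α : Fin (n + 1) → ℝ}

theorem isAllocation_cyclicMixture (h0 : ∀ i, 0 ≤ α i) (hsum : ∑ i, α i = 1) :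
    IsAllocation (cyclicMixture α) := by
  refine isAllocation_sum_mul (fun t : Fin (n + 1) × Bool => div_nonneg (h0 t.1) zero_le_two)
    ?_ fun t => isAllocation_priorityRule (cyclicKey_injective t.1 t.2)
  simp [Fintype.sum_prod_type, ← sum_div, ← mul_sum, hsum]

theorem interimProb_cyclicMixture (hα : ∀ i, α i ≠ 0) (i : Fin (n + 1)) :
    interimProb α (cyclicMixture α) i = 1 - ∏ j, (1 - α j) := by
  unfold cyclicMixture
  rw [interimProb_sum_mul, Fintype.sum_prod_type]
  simp only [Fintype.sum_bool, interimProb_priorityRule α _ (hα _), sum_add_distrib,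
    div_mul_eq_mul_div, ← sum_div, sum_mul_prod_cyclicKey]
  ring

theorem cyclicMixture_pair_le (h0 : ∀ i, 0 ≤ α i) (hsum : ∑ i, α i = 1) {i j : Fin (n + 1)}
    (hij : i ≠ j) : cyclicMixture α {i, j} j ≤ (1 + α i) / 2 := by
  simp only [cyclicMixture, Fintype.sum_prod_type, Fintype.sum_bool, ← mul_add]
  calc ∑ m, α m / 2 * (priorityRule (cyclicKey m true) {i, j} j
          + priorityRule (cyclicKey m false) {i, j} j)
      ≤ ∑ m, α m / 2 * (1 + if m = i then 1 else 0) :=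
        sum_le_sum fun m _ => mul_le_mul_of_nonneg_left
          (priorityRule_cyclicKey_pair_add_le hij m) (div_nonneg (h0 m) zero_le_two)
    _ = (1 + α i) / 2 := by
      simp only [mul_add, mul_one, mul_ite, mul_zero, sum_add_distrib, ← sum_div, hsum,
        sum_ite_eq', mem_univ, if_true]
      ring

end Cyclic
theorem stmt_3_general (n : ℕ) (α : Fin n → ℝ)
    (hα : ∀ i, 0 < α i ∧ α i < 1) (hsum : ∑ i, α i = 1) :
    (∃ q : Finset (Fin n) → Fin n → ℝ,
      (∀ S i, 0 ≤ q S i ∧ q S i ≤ 1) ∧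
      (∀ S i, i ∉ S → q S i = 0) ∧
      (∀ S : Finset (Fin n), S.Nonempty → ∑ i ∈ S, q S i = 1) ∧
      (∀ i, (1 - ∏ j, (1 - α j)) =
        ∑ S ∈ Finset.univ.filter (fun S : Finset (Fin n) => i ∈ S),
          q S i * (∏ j ∈ S.erase i, α j) * (∏ j ∈ Sᶜ, (1 - α j))) ∧
      (∀ i j : Fin n, i ≠ j → q {i, j} j ≤ (1 + α i) / 2)) ↔
    (∀ I : Finset (Fin n),
      (1 - ∏ k, (1 - α k)) * (∑ i ∈ I, α i)
        + (∏ i ∈ I, (1 - α i))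
        + (1 / 2) * (∏ k, (1 - α k)) * (∑ i ∈ I, α i / (1 - α i)) * (∑ j ∈ Iᶜ, α j)
        ≤ 1) := by
  obtain ⟨n, rfl⟩ : ∃ m, n = m + 1 :=
    Nat.exists_eq_succ_of_ne_zero fun h => by subst h; simp at hsum
  have h0 i : 0 ≤ α i := (hα i).1.le
  constructor
  · rintro ⟨q, hbounds, hzero, hrow, hinterim, hcap⟩ I
    have hq : IsAllocation q := ⟨hbounds, hzero, hrow⟩
    have hI : ∑ i ∈ I, α i * interimProb α q i = (1 - ∏ j, (1 - α j)) * ∑ i ∈ I, α i := by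
      simp only [interimProb, ← hinterim, ← sum_mul]
      ring
    linarith [hq.sum_mul_interimProb_add_le_one h0 (fun i => (hα i).2) hcap I]
  · intro _
    have hq := isAllocation_cyclicMixture h0 hsum
    exact ⟨cyclicMixture α, hq.nonneg_and_le_one, hq.eq_zero_of_notMem, hq.sum_eq_one,
      fun i => (interimProb_cyclicMixture (fun j => (hα j).1.ne') i).symm,
      fun i j hij => cyclicMixture_pair_le h0 hsum hij⟩

theorem stmt_3 (n : ℕ) (hn : 2 ≤ n) (α : Fin n → ℝ)
    (hα : ∀ i, 0 < α i ∧ α i < 1) (hsum : ∑ i, α i = 1) :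
    (∃ q : Finset (Fin n) → Fin n → ℝ,
      (∀ S i, 0 ≤ q S i ∧ q S i ≤ 1) ∧
      (∀ S i, i ∉ S → q S i = 0) ∧
      (∀ S : Finset (Fin n), S.Nonempty → ∑ i ∈ S, q S i = 1) ∧
      (∀ i, (1 - ∏ j, (1 - α j)) =
        ∑ S ∈ Finset.univ.filter (fun S : Finset (Fin n) => i ∈ S),
          q S i * (∏ j ∈ S.erase i, α j) * (∏ j ∈ Sᶜ, (1 - α j))) ∧
      (∀ i j : Fin n, i ≠ j → q {i, j} j ≤ (1 + α i) / 2)) ↔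
    (∀ I : Finset (Fin n),
      (1 - ∏ k, (1 - α k)) * (∑ i ∈ I, α i)
        + (∏ i ∈ I, (1 - α i))
        + (1 / 2) * (∏ k, (1 - α k)) * (∑ i ∈ I, α i / (1 - α i)) * (∑ j ∈ Iᶜ, α j)
        ≤ 1) :=
  stmt_3_general n α hα hsum
end

section
/- Let n ≥ 2 and let α_1,…,α_n ∈ (0,1) be real numbers with Σ_{i=1}^n α_i = 1. Then there exist allocation probabilities (q_S^i) (a family with q_S^i ∈ [0,1], q_S^i = 0 when i ∉ S, Σ_{i∈S} q_S^i = 1 for every nonempty S ⊆ {1,…,n}) such that: (a) for every i, Σ_{S∋i} q_S^i ∏_{j∈S∖{i}} α_j ∏_{j∉S}(1−α_j) = 1 − ∏_{k=1}^n (1−α_k), and (b) q_{{i,j}}^j ≤ (1+α_i)/2 for every two-element subset {i,j} ⊆ {1,…,n} and both orderings of i and j. -/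
/-!
Draw a start `k` with probability `α k`, walk around the cycle `0 → 1 → ⋯ → n - 1 → 0` from `k`
and give the item to the first present agent met; `q` averages this rule with the one walking the
other way. In either direction, `i` wins from `k` exactly when no agent met before `i` is present,
and these agents are the `x` lying closer to `i` than `k` does. Ordering the starts by their
distance to `i`, the interim allocation of `i` therefore telescopes:
`∑ k, α k * ∏ (x before k), (1 - α x) = 1 - ∏ x, (1 - α x)`.
For a pair `{i, j}`, from every start other than `i` at most one of the two directions hands the
item to `j`, which gives the bound `(1 + α i) / 2`.
-/

open Finset Function

namespace Finset

variable {ι β R : Type*} [DecidableEq ι] [LinearOrder β] [CommRing R]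

theorem sum_mul_prod_filter_lt_eq_one_sub_prod (s : Finset ι) {τ : ι → β} (hτ : Injective τ)
    (α : ι → R) :
    ∑ k ∈ s, α k * ∏ x ∈ s with τ x < τ k, (1 - α x) = 1 - ∏ x ∈ s, (1 - α x) := by
  induction s using Finset.induction_on_max_value τ with
  | empty => simp
  | insert a s ha hmax ih =>
    have hlt : ∀ x ∈ s, τ x < τ a := fun x hx =>
      (hmax x hx).lt_of_ne (hτ.ne (ne_of_mem_of_not_mem hx ha))
    have hs : ∀ k ∈ s, ({x ∈ insert a s | τ x < τ k} : Finset ι) = {x ∈ s | τ x < τ k} :=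
      fun k hk => by rw [filter_insert, if_neg (not_lt.2 (hlt k hk).le)]
    rw [sum_insert ha, prod_insert ha, filter_insert, if_neg (lt_irrefl _),
      filter_true_of_mem hlt, sum_congr rfl fun k hk => by rw [hs k hk], ih]
    ring

end Finset

section Allocation

variable {ι β R : Type*} [Fintype ι] [DecidableEq ι] [LinearOrder β] [CommRing R]

/-- The probability that exactly the agents of `S` are present, given that `i` is, when each `j`
is present independently with probability `α j`. -/
def presenceWeight (α : ι → R) (i : ι) (S : Finset ι) : R :=
  (∏ j ∈ S.erase i, α j) * ∏ j ∈ Sᶜ, (1 - α j)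

theorem sum_presenceWeight_of_disjoint (α : ι → R) {i : ι} {B : Finset ι} (hiB : i ∉ B) :
    ∑ S with i ∈ S ∧ Disjoint S B, presenceWeight α i S = ∏ j ∈ B, (1 - α j) := by
  -- Expand `∏ j, (f j + g j)` over subsets: `f j` and `g j` weigh `j` being in and out of `S`,
  -- with `i` forced in and `B` forced out.
  set f : ι → R := fun j => if j = i then 1 else if j ∉ B then α j else 0
  set g : ι → R := fun j => if j = i then 0 else 1 - α j
  have hfg : ∏ j, (f j + g j) = ∏ j ∈ B, (1 - α j) := by
    rw [← univ_inter B, ← prod_ite_mem]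
    refine prod_congr rfl fun j _ => ?_
    by_cases hji : j = i
    · subst hji; simp [f, g, hiB]
    · by_cases hjB : j ∈ B <;> simp [f, g, hji, hjB]
  have hterm : ∀ S : Finset ι, (∏ j ∈ S, f j) * ∏ j ∈ univ \ S, g j =
      if i ∈ S ∧ Disjoint S B then presenceWeight α i S else 0 := by
    intro S
    rw [← compl_eq_univ_sdiff]
    by_cases hiS : i ∈ S
    · have hg : ∏ j ∈ Sᶜ, g j = ∏ j ∈ Sᶜ, (1 - α j) :=
        prod_congr rfl fun j hj => by simp [g, (ne_of_mem_of_not_mem hiS (mem_compl.1 hj)).symm]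
      have hf : ∏ j ∈ S, f j = ∏ j ∈ S.erase i, if j ∉ B then α j else 0 := by
        rw [← mul_prod_erase S f hiS, show f i = 1 from if_pos rfl, one_mul]
        exact prod_congr rfl fun j hj => if_neg (ne_of_mem_erase hj)
      have hdisj : (∀ j ∈ S.erase i, j ∉ B) ↔ Disjoint S B := by
        rw [disjoint_left]
        exact ⟨fun h j hj => if hji : j = i then hji ▸ hiB else h j (mem_erase.2 ⟨hji, hj⟩),
          fun h j hj => h (mem_of_mem_erase hj)⟩
      rw [hg, hf, prod_ite_zero]
      simp only [hdisj, hiS, true_and, presenceWeight]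
      split_ifs <;> simp
    · rw [if_neg (fun h => hiS h.1)]
      exact mul_eq_zero_of_right _ (prod_eq_zero (mem_compl.2 hiS) (if_pos rfl))
  rw [← hfg, prod_add, powerset_univ, sum_filter]
  exact sum_congr rfl fun S _ => (hterm S).symm

/-- Draw a start `k` with probability `α k` and give the item to the member of `S` ranked first
by `r k`. -/
def rankAlloc (α : ι → ℝ) (r : ι → ι → β) (S : Finset ι) (i : ι) : ℝ :=
  ∑ k, if i ∈ S ∧ ∀ x ∈ S, r k i ≤ r k x then α k else 0

section rankAlloc

variable {α : ι → ℝ} {r : ι → ι → β}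

theorem rankAlloc_nonneg (hα : ∀ k, 0 ≤ α k) (S : Finset ι) (i : ι) : 0 ≤ rankAlloc α r S i :=
  sum_nonneg fun k _ => by split_ifs <;> simp [hα k]

theorem rankAlloc_le_sum (hα : ∀ k, 0 ≤ α k) (S : Finset ι) (i : ι) :
    rankAlloc α r S i ≤ ∑ k, α k :=
  sum_le_sum fun k _ => by split_ifs <;> simp [hα k]

theorem rankAlloc_of_notMem {S : Finset ι} {i : ι} (h : i ∉ S) : rankAlloc α r S i = 0 :=
  sum_eq_zero fun _ _ => if_neg fun hi => h hi.1

theorem sum_rankAlloc (hr : ∀ k, Injective (r k)) {S : Finset ι} (hS : S.Nonempty) :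
    ∑ i ∈ S, rankAlloc α r S i = ∑ k, α k := by
  simp only [rankAlloc]
  rw [sum_comm]
  refine sum_congr rfl fun k _ => ?_
  obtain ⟨i, hiS, hmin⟩ := exists_min_image S (r k) hS
  rw [sum_eq_single_of_mem i hiS fun x hxS hxi => if_neg fun h =>
    hxi (hr k ((h.2 i hiS).antisymm (hmin x hxS))), if_pos ⟨hiS, hmin⟩]

theorem rankAlloc_pair_right (i j : ι) :
    rankAlloc α r {i, j} j = ∑ k, if r k j ≤ r k i then α k else 0 := by
  simp [rankAlloc]

theorem sum_rankAlloc_mul_presenceWeight (hr : ∀ k i x, r k x < r k i ↔ r x i < r k i)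
    (i : ι) (hinj : Injective fun k => r k i) :
    ∑ S with i ∈ S, rankAlloc α r S i * presenceWeight α i S = 1 - ∏ k, (1 - α k) :=
  calc ∑ S with i ∈ S, rankAlloc α r S i * presenceWeight α i S
      = ∑ k, α k * ∑ S with i ∈ S ∧ Disjoint S ({x | r k x < r k i} : Finset ι),
          presenceWeight α i S := by
        simp only [rankAlloc, sum_mul, ite_mul, zero_mul, mul_sum]
        rw [sum_comm]
        refine sum_congr rfl fun k _ => ?_
        rw [← sum_filter, filter_filter]
        refine sum_congr (filter_congr fun S _ => ?_) fun _ _ => rfl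
        simp only [disjoint_left, mem_filter, mem_univ, true_and, not_lt]
        tauto
    _ = ∑ k, α k * ∏ x with r x i < r k i, (1 - α x) := by
        refine sum_congr rfl fun k _ => ?_
        rw [sum_presenceWeight_of_disjoint α (by simp), filter_congr fun x _ => hr k i x]
    _ = 1 - ∏ k, (1 - α k) := sum_mul_prod_filter_lt_eq_one_sub_prod univ hinj α

end rankAlloc

end Allocation

/-- The number of steps from `k` forward to `x` around the cycle `0 → 1 → ⋯ → n - 1 → 0`, taken in
`[1, n]` so that `k` comes last in the order `cyclicDist n k`. -/
def cyclicDist (n : ℕ) (k x : Fin n) : ℕ :=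
  if k < x then (x : ℕ) - k else n + x - k

section cyclicDist

variable {n : ℕ}

theorem cyclicDist_injective (k : Fin n) : Injective (cyclicDist n k) := by
  intro x y h
  have := k.isLt; have := x.isLt; have := y.isLt
  simp only [cyclicDist, Fin.lt_def] at h
  ext
  split_ifs at h <;> omega

theorem cyclicDist_injective_left (i : Fin n) : Injective (cyclicDist n · i) := by
  intro x y h
  have := i.isLt; have := x.isLt; have := y.isLt
  simp only [cyclicDist, Fin.lt_def] at h
  ext
  split_ifs at h <;> omega

theorem cyclicDist_lt_iff (k i x : Fin n) :
    cyclicDist n k x < cyclicDist n k i ↔ cyclicDist n x i < cyclicDist n k i := by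
  have := k.isLt; have := x.isLt; have := i.isLt
  simp only [cyclicDist, Fin.lt_def]
  split_ifs <;> omega

theorem not_cyclicDist_le_and_le {i j k : Fin n} (hki : k ≠ i) (hij : i ≠ j) :
    ¬ (cyclicDist n k j ≤ cyclicDist n k i ∧ cyclicDist n j k ≤ cyclicDist n i k) := by
  have := k.isLt; have := j.isLt; have := i.isLt
  rw [Ne, Fin.ext_iff] at hki hij
  simp only [cyclicDist, Fin.lt_def]
  split_ifs <;> omega

theorem rankAlloc_cyclicDist_add_swap_pair_le {α : Fin n → ℝ} (hα : ∀ k, 0 ≤ α k) {i j : Fin n}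
    (hij : i ≠ j) :
    rankAlloc α (cyclicDist n) {i, j} j + rankAlloc α (swap (cyclicDist n)) {i, j} j ≤
      ∑ k, α k + α i := by
  rw [rankAlloc_pair_right, rankAlloc_pair_right, ← sum_add_distrib, ← sum_ite_eq_of_mem' univ i α
    (mem_univ i), ← sum_add_distrib]
  refine sum_le_sum fun k _ => ?_
  have hk := hα k
  by_cases hki : k = i
  · subst hki
    simp only [if_true]
    split_ifs <;> linarith
  · have := not_cyclicDist_le_and_le hki hij
    simp only [swap, hki, if_false]
    split_ifs <;> simp_all

end cyclicDist

theorem stmt_4_general (n : ℕ) (α : Fin n → ℝ)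
    (hα : ∀ i, 0 < α i ∧ α i < 1) (hsum : ∑ i, α i = 1) :
    ∃ q : Finset (Fin n) → Fin n → ℝ,
      (∀ S i, 0 ≤ q S i ∧ q S i ≤ 1) ∧
      (∀ S i, i ∉ S → q S i = 0) ∧
      (∀ S : Finset (Fin n), S.Nonempty → ∑ i ∈ S, q S i = 1) ∧
      (∀ i, (∑ S ∈ Finset.univ.filter (fun S : Finset (Fin n) => i ∈ S),
          q S i * (∏ j ∈ S.erase i, α j) * (∏ j ∈ Sᶜ, (1 - α j)))
        = 1 - ∏ k, (1 - α k)) ∧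
      (∀ i j : Fin n, i ≠ j → q {i, j} j ≤ (1 + α i) / 2) := by
  set r := cyclicDist n
  have hα₀ : ∀ k, 0 ≤ α k := fun k => (hα k).1.le
  have hr : ∀ k i x, r k x < r k i ↔ r x i < r k i := cyclicDist_lt_iff
  refine ⟨fun S i => (rankAlloc α r S i + rankAlloc α (swap r) S i) / 2,
    fun S i => ⟨?_, ?_⟩, fun S i hi => ?_, fun S hS => ?_, fun i => ?_, fun i j hij => ?_⟩
  · exact div_nonneg (add_nonneg (rankAlloc_nonneg hα₀ S i) (rankAlloc_nonneg hα₀ S i)) zero_le_two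
  · linarith [rankAlloc_le_sum (r := r) hα₀ S i, rankAlloc_le_sum (r := swap r) hα₀ S i]
  · simp [rankAlloc_of_notMem hi]
  · rw [← sum_div, sum_add_distrib, sum_rankAlloc cyclicDist_injective hS,
      sum_rankAlloc cyclicDist_injective_left hS, hsum]
    norm_num
  · calc _ = (∑ S with i ∈ S, rankAlloc α r S i * presenceWeight α i S
          + ∑ S with i ∈ S, rankAlloc α (swap r) S i * presenceWeight α i S) / 2 := by
          rw [← sum_add_distrib, sum_div]
          exact sum_congr rfl fun S _ => by rw [presenceWeight]; ring
      _ = _ := by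
          rw [sum_rankAlloc_mul_presenceWeight hr i (cyclicDist_injective_left i),
            sum_rankAlloc_mul_presenceWeight (fun k i x => (hr i k x).symm) i
              (cyclicDist_injective i)]
          ring
  · linarith [rankAlloc_cyclicDist_add_swap_pair_le hα₀ hij]

theorem stmt_4 (n : ℕ) (hn : 2 ≤ n) (α : Fin n → ℝ)
    (hα : ∀ i, 0 < α i ∧ α i < 1) (hsum : ∑ i, α i = 1) :
    ∃ q : Finset (Fin n) → Fin n → ℝ,
      (∀ S i, 0 ≤ q S i ∧ q S i ≤ 1) ∧
      (∀ S i, i ∉ S → q S i = 0) ∧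
      (∀ S : Finset (Fin n), S.Nonempty → ∑ i ∈ S, q S i = 1) ∧
      (∀ i, (∑ S ∈ Finset.univ.filter (fun S : Finset (Fin n) => i ∈ S),
          q S i * (∏ j ∈ S.erase i, α j) * (∏ j ∈ Sᶜ, (1 - α j)))
        = 1 - ∏ k, (1 - α k)) ∧
      (∀ i j : Fin n, i ≠ j → q {i, j} j ≤ (1 + α i) / 2) :=
  stmt_4_general n α hα hsum
end

section
/- Let n ≥ 1 and let α_1,…,α_n ∈ (0,1] be real numbers with Σ_{i=1}^n α_i = 1. Then there exist allocation probabilities (q_S^i) (a family with q_S^i ∈ [0,1], q_S^i = 0 when i ∉ S, Σ_{i∈S} q_S^i = 1 for every nonempty S ⊆ {1,…,n}) such that for every i, Σ_{S∋i} q_S^i ∏_{j∈S∖{i}} α_j ∏_{j∉S}(1−α_j) = 1 − ∏_{j=1}^n (1−α_j); that is, the induced interim allocation probabilities are the same for all agents and equal 1 − ∏_{j=1}^n (1−α_j). -/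
/-!
Mix priority orders. With probability `α k`, the item goes to the first bidder in the cyclic
order that starts just after agent `k` and ends with `k`. Under a fixed priority order, agent `i`
wins exactly when nobody ranked before `i` bids, so `i`'s interim probability is
`∑ k, α k * ∏ (1 - α j)` over the agents `j` between `k` and `i`. Walking backwards around the
cycle from `i`, with `a d = α (i - 1 - d)`, this is the "first success" sum
`∑ d, a d * ∏_{e < d} (1 - a e) = 1 - ∏ d, (1 - a d)`, which does not depend on `i`.
-/

open Finset

section Priority

variable {ι : Type*} [Fintype ι] [DecidableEq ι]

theorem filter_mem_and_disjoint_eq_image_insert {i : ι} {B : Finset ι} (hiB : i ∉ B) :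
    ({S | i ∈ S ∧ Disjoint S B} : Finset (Finset ι)) = (insert i B)ᶜ.powerset.image (insert i) := by
  ext S
  simp only [mem_filter, mem_univ, true_and, mem_image, mem_powerset,
    subset_compl_iff_disjoint_right, disjoint_insert_right]
  constructor
  · rintro ⟨hiS, hSB⟩
    exact ⟨S.erase i, ⟨notMem_erase i S, hSB.mono_left (erase_subset i S)⟩, insert_erase hiS⟩
  · rintro ⟨T, ⟨-, hTB⟩, rfl⟩
    exact ⟨mem_insert_self i T, disjoint_insert_left.2 ⟨hiB, hTB⟩⟩

theorem sum_prod_erase_mul_prod_compl_eq_prod_one_sub {R : Type*} [CommRing R] (α : ι → R)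
    {i : ι} {B : Finset ι} (hiB : i ∉ B) :
    ∑ S with i ∈ S ∧ Disjoint S B, (∏ j ∈ S.erase i, α j) * ∏ j ∈ Sᶜ, (1 - α j) =
      ∏ j ∈ B, (1 - α j) := by
  set C := (insert i B)ᶜ
  have hiC : i ∉ C := by simp [C]
  have hinj : Set.InjOn (insert i) (C.powerset : Set (Finset ι)) := fun T hT T' hT' h => by
    rw [← erase_insert (fun h => hiC (mem_powerset.1 hT h)),
      ← erase_insert (fun h => hiC (mem_powerset.1 hT' h)), h]
  have hterm : ∀ T ∈ C.powerset,
      (∏ j ∈ (insert i T).erase i, α j) * ∏ j ∈ (insert i T)ᶜ, (1 - α j) =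
        (∏ j ∈ B, (1 - α j)) * ((∏ j ∈ T, α j) * ∏ j ∈ C \ T, (1 - α j)) := by
    intro T hT
    have hTC := mem_powerset.1 hT
    have hBC : Disjoint B C := disjoint_compl_right.mono_left (subset_insert i B)
    have hcompl : (insert i T)ᶜ = B ∪ C \ T := by
      ext j
      have := @hTC j
      by_cases hj : j ∈ T <;> by_cases hji : j = i <;> by_cases hjB : j ∈ B <;> simp_all [C]
    rw [erase_insert (fun h => hiC (hTC h)), hcompl, prod_union (hBC.mono_right sdiff_subset)]
    ring
  rw [filter_mem_and_disjoint_eq_image_insert hiB, sum_image hinj, sum_congr rfl hterm, ← mul_sum,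
    ← prod_add]
  simp

variable {κ β : Type*} [Fintype κ] [LinearOrder β]

/-- With probability `w k`, the item goes to the bidder of `S` ranked first by `rank k`. -/
def priorityAllocation (w : κ → ℝ) (rank : κ → ι → β) (S : Finset ι) (i : ι) : ℝ :=
  ∑ k with i ∈ S ∧ ∀ j ∈ S, rank k i ≤ rank k j, w k

variable {w : κ → ℝ} {rank : κ → ι → β}

theorem priorityAllocation_nonneg (hw : ∀ k, 0 ≤ w k) (S : Finset ι) (i : ι) :
    0 ≤ priorityAllocation w rank S i :=
  sum_nonneg fun k _ => hw k

theorem priorityAllocation_le_sum (hw : ∀ k, 0 ≤ w k) (S : Finset ι) (i : ι) :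
    priorityAllocation w rank S i ≤ ∑ k, w k :=
  sum_le_sum_of_subset_of_nonneg (filter_subset _ _) fun k _ _ => hw k

theorem priorityAllocation_of_notMem {S : Finset ι} {i : ι} (hi : i ∉ S) :
    priorityAllocation w rank S i = 0 :=
  sum_eq_zero fun _ hk => absurd (mem_filter.1 hk).2.1 hi

theorem sum_priorityAllocation (hrank : ∀ k, Function.Injective (rank k)) {S : Finset ι}
    (hS : S.Nonempty) : ∑ i ∈ S, priorityAllocation w rank S i = ∑ k, w k := by
  simp only [priorityAllocation, sum_filter]
  rw [sum_comm]
  refine sum_congr rfl fun k _ => ?_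
  obtain ⟨i₀, hi₀S, hi₀⟩ := S.exists_min_image (rank k) hS
  have hfirst : ∀ i ∈ S, (i ∈ S ∧ ∀ j ∈ S, rank k i ≤ rank k j) ↔ i = i₀ := fun i hi =>
    ⟨fun h => hrank k (le_antisymm (h.2 i₀ hi₀S) (hi₀ i hi)), fun h => h ▸ ⟨hi₀S, hi₀⟩⟩
  rw [sum_congr rfl fun i hi => if_congr (hfirst i hi) rfl rfl, sum_ite_eq' S i₀, if_pos hi₀S]

theorem sum_priorityAllocation_mul_prod (α : ι → ℝ) (i : ι) :
    ∑ S with i ∈ S, priorityAllocation w rank S i * (∏ j ∈ S.erase i, α j) *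
        ∏ j ∈ Sᶜ, (1 - α j) =
      ∑ k, w k * ∏ j with rank k j < rank k i, (1 - α j) := by
  simp only [priorityAllocation, sum_mul]
  rw [sum_comm' (t' := univ)
    (s' := fun k => {S | i ∈ S ∧ Disjoint S ({j | rank k j < rank k i} : Finset ι)})
    (fun S k => by simp [disjoint_left])]
  refine sum_congr rfl fun k _ => ?_
  rw [← sum_prod_erase_mul_prod_compl_eq_prod_one_sub (i := i) α (by simp), mul_sum]
  simp only [mul_assoc]

end Priority

theorem Fin.sub_sub_one_lt_self_iff {m : ℕ} (a b : Fin (m + 1)) : a - b - 1 < a ↔ b < a := by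
  rw [sub_sub, Fin.lt_def, Fin.lt_def, Fin.val_sub, Fin.val_add_one]
  have ha := a.isLt
  split_ifs with hb
  · simp only [tsub_zero, Nat.add_mod_left, Nat.mod_eq_of_lt ha, lt_self_iff_false, false_iff,
      not_lt]
    exact hb ▸ Fin.le_last a
  · have hb' : b.val < m := Fin.val_lt_last hb
    rcases lt_or_ge b.val a.val with h | h
    · rw [Nat.mod_eq_sub_mod (by omega), Nat.mod_eq_of_lt (by omega)]
      omega
    · rw [Nat.mod_eq_of_lt (by omega)]
      omega

/-- The cyclic ranking `j ↦ j - k - 1` puts `k + 1` first and `k` last. -/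
theorem sum_mul_prod_cyclic_predecessors {R : Type*} [CommRing R] {m : ℕ} (α : Fin (m + 1) → R)
    (i : Fin (m + 1)) :
    ∑ k, α k * ∏ j with j - k - 1 < i - k - 1, (1 - α j) = 1 - ∏ j, (1 - α j) := by
  set φ := Equiv.subLeft (i - 1)
  have hφφ : ∀ d, φ (φ d) = d := fun d => sub_sub_cancel (i - 1) d
  have hbefore : ∀ j k : Fin (m + 1), j - k - 1 < i - k - 1 ↔ φ j < φ k := fun j k => by
    rw [show j - k - 1 = (i - k - 1) - (i - j - 1) - 1 by abel, Fin.sub_sub_one_lt_self_iff]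
    simp only [φ, Equiv.subLeft_apply, sub_right_comm i]
  rw [← Equiv.prod_comp φ, prod_one_sub_ordered univ (fun d => α (φ d)), sub_sub_cancel,
    ← Equiv.sum_comp φ]
  refine sum_congr rfl fun k _ => congrArg _ (prod_equiv φ (fun j => ?_) fun j _ => by rw [hφφ])
  simp [hbefore, hφφ]

theorem stmt_5 (n : ℕ) (hn : 1 ≤ n) (α : Fin n → ℝ)
    (hα : ∀ i, 0 < α i ∧ α i ≤ 1) (hsum : ∑ i, α i = 1) :
    ∃ q : Finset (Fin n) → Fin n → ℝ,
      (∀ S i, 0 ≤ q S i ∧ q S i ≤ 1) ∧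
      (∀ S i, i ∉ S → q S i = 0) ∧
      (∀ S : Finset (Fin n), S.Nonempty → ∑ i ∈ S, q S i = 1) ∧
      (∀ i, (∑ S ∈ Finset.univ.filter (fun S : Finset (Fin n) => i ∈ S),
          q S i * (∏ j ∈ S.erase i, α j) * (∏ j ∈ Sᶜ, (1 - α j)))
        = 1 - ∏ j, (1 - α j)) := by
  obtain ⟨m, rfl⟩ : ∃ m, n = m + 1 := ⟨n - 1, by omega⟩
  have hw : ∀ k, 0 ≤ α k := fun k => (hα k).1.le
  let rank : Fin (m + 1) → Fin (m + 1) → Fin (m + 1) := fun k j => j - k - 1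
  have hrank : ∀ k, Function.Injective (rank k) := fun k =>
    sub_left_injective.comp sub_left_injective
  exact ⟨priorityAllocation α rank,
    fun S i => ⟨priorityAllocation_nonneg hw S i, hsum ▸ priorityAllocation_le_sum hw S i⟩,
    fun S i => priorityAllocation_of_notMem,
    fun S hS => hsum ▸ sum_priorityAllocation hrank hS,
    fun i => (sum_priorityAllocation_mul_prod α i).trans (sum_mul_prod_cyclic_predecessors α i)⟩
end

section
/- Let n ≥ 1 and let α_1,…,α_n ∈ [0,1] be real numbers with Σ_{i=1}^n α_i = 1. Then for every subset I ⊆ {1,…,n}: (1 − ∏_{j=1}^n (1−α_j))·Σ_{i∈I} α_i ≤ 1 − ∏_{i∈I}(1−α_i). -/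
/-!
Write `s = ∑_{i ∈ I} αᵢ`, `P = ∏_{i ∈ I} (1 - αᵢ)` and `Q = ∏_{i ∉ I} (1 - αᵢ)`, so that the full
product is `P * Q`. The Weierstrass product inequality gives `Q ≥ 1 - ∑_{i ∉ I} αᵢ = s`, and
`(1 - αᵢ)(1 + αᵢ) ≤ 1` together with `∏ (1 + αᵢ) ≥ 1 + s` gives `P (1 + s) ≤ 1`. Then
`(1 - P Q) s ≤ (1 - P s) s` and `1 - P - (1 - P s) s = (1 - s)(1 - P (1 + s)) ≥ 0`.
-/

namespace Finset

variable {ι R : Type*} [CommRing R] [LinearOrder R] [IsStrictOrderedRing R]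

theorem one_add_sum_le_prod_one_add (s : Finset ι) {f : ι → R} (hf : ∀ i ∈ s, 0 ≤ f i) :
    1 + ∑ i ∈ s, f i ≤ ∏ i ∈ s, (1 + f i) := by
  classical
  induction s using Finset.induction with
  | empty => simp
  | insert a s ha ih =>
    rw [sum_insert ha, prod_insert ha]
    have hfa := hf a (mem_insert_self a s)
    have ih := ih fun i hi => hf i (mem_insert_of_mem hi)
    have hsum : 0 ≤ ∑ i ∈ s, f i := sum_nonneg fun i hi => hf i (mem_insert_of_mem hi)
    nlinarith

theorem one_sub_sum_le_prod_one_sub_s6 (s : Finset ι) {f : ι → R}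
    (hf : ∀ i ∈ s, 0 ≤ f i ∧ f i ≤ 1) : 1 - ∑ i ∈ s, f i ≤ ∏ i ∈ s, (1 - f i) := by
  classical
  induction s using Finset.induction with
  | empty => simp
  | insert a s ha ih =>
    rw [sum_insert ha, prod_insert ha]
    obtain ⟨hfa₀, hfa₁⟩ := hf a (mem_insert_self a s)
    have ih := ih fun i hi => hf i (mem_insert_of_mem hi)
    have hsum : 0 ≤ ∑ i ∈ s, f i := sum_nonneg fun i hi => (hf i (mem_insert_of_mem hi)).1
    have hprod : 0 ≤ ∏ i ∈ s, (1 - f i) :=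
      prod_nonneg fun i hi => sub_nonneg.2 (hf i (mem_insert_of_mem hi)).2
    nlinarith

theorem prod_one_sub_mul_one_add_sum_le_one (s : Finset ι) {f : ι → R}
    (hf : ∀ i ∈ s, 0 ≤ f i ∧ f i ≤ 1) : (∏ i ∈ s, (1 - f i)) * (1 + ∑ i ∈ s, f i) ≤ 1 :=
  calc (∏ i ∈ s, (1 - f i)) * (1 + ∑ i ∈ s, f i)
      ≤ (∏ i ∈ s, (1 - f i)) * ∏ i ∈ s, (1 + f i) :=
        mul_le_mul_of_nonneg_left (one_add_sum_le_prod_one_add s fun i hi => (hf i hi).1)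
          (prod_nonneg fun i hi => sub_nonneg.2 (hf i hi).2)
    _ = ∏ i ∈ s, (1 - f i ^ 2) := by rw [← prod_mul_distrib]; congr! 1; ring
    _ ≤ 1 := prod_le_one (fun i hi => by nlinarith [hf i hi]) fun i hi => by
        nlinarith [hf i hi]

end Finset

theorem mul_le_one_sub_of_mul_one_add_le_one {R : Type*} [CommRing R] [LinearOrder R]
    [IsStrictOrderedRing R] {s P Q : R} (hs₀ : 0 ≤ s) (hs₁ : s ≤ 1) (hP : 0 ≤ P)
    (hsQ : s ≤ Q) (hPs : P * (1 + s) ≤ 1) : (1 - P * Q) * s ≤ 1 - P := by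
  nlinarith [mul_le_mul_of_nonneg_left hsQ (mul_nonneg hP hs₀)]

theorem stmt_6_general (n : ℕ) (α : Fin n → ℝ)
    (hα : ∀ i, 0 ≤ α i ∧ α i ≤ 1) (hsum : ∑ i, α i = 1) (I : Finset (Fin n)) :
    (1 - ∏ j, (1 - α j)) * (∑ i ∈ I, α i) ≤ 1 - ∏ i ∈ I, (1 - α i) := by
  have hcompl : ∑ i ∈ Iᶜ, α i = 1 - ∑ i ∈ I, α i := by
    rw [← hsum, ← Finset.sum_add_sum_compl I α, add_sub_cancel_left]
  have hQ : ∑ i ∈ I, α i ≤ ∏ i ∈ Iᶜ, (1 - α i) := by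
    have := Finset.one_sub_sum_le_prod_one_sub_s6 Iᶜ fun i _ => hα i
    rwa [hcompl, sub_sub_cancel] at this
  rw [← Finset.prod_mul_prod_compl I]
  refine mul_le_one_sub_of_mul_one_add_le_one (Finset.sum_nonneg fun i _ => (hα i).1) ?_
    (Finset.prod_nonneg fun i _ => sub_nonneg.2 (hα i).2) hQ
    (Finset.prod_one_sub_mul_one_add_sum_le_one I fun i _ => hα i)
  rw [← hsum]
  exact Finset.sum_le_sum_of_subset_of_nonneg (Finset.subset_univ I) fun i _ _ => (hα i).1

theorem stmt_6 (n : ℕ) (hn : 1 ≤ n) (α : Fin n → ℝ)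
    (hα : ∀ i, 0 ≤ α i ∧ α i ≤ 1) (hsum : ∑ i, α i = 1) (I : Finset (Fin n)) :
    (1 - ∏ j, (1 - α j)) * (∑ i ∈ I, α i) ≤ 1 - ∏ i ∈ I, (1 - α i) :=
  stmt_6_general n α hα hsum I
end

section
/- Let α_1,…,α_n ∈ [0,1] be real numbers, let I ⊆ {1,…,n} with k ∈ I and I∖{k} ≠ ∅, and suppose Σ_{i∈I∖{k}} α_i > 0. Then (1 − ∏_{i∈I}(1−α_i)) / (Σ_{i∈I} α_i) ≤ (1 − ∏_{i∈I∖{k}}(1−α_i)) / (Σ_{i∈I∖{k}} α_i). In other words, the quantity a_I = (1 − ∏_{i∈I}(1−α_i))/(Σ_{i∈I} α_i) is nonincreasing under adding an element to I. -/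
open Finset Real

/-- Follows from `1 - x ≤ exp (-x)` and `(1 + t) * exp (-t) ≤ 1`. -/
lemma prod_one_sub_mul_one_add_sum_le_one {ι : Type*} (s : Finset ι) (x : ι → ℝ)
    (hx : ∀ i ∈ s, x i ≤ 1) :
    (∏ i ∈ s, (1 - x i)) * (1 + ∑ i ∈ s, x i) ≤ 1 := by
  have hfactor_nonneg : ∀ i ∈ s, 0 ≤ 1 - x i := fun i hi => sub_nonneg.2 (hx i hi)
  have hprod_le_exp : ∏ i ∈ s, (1 - x i) ≤ exp (-∑ i ∈ s, x i) := by
    rw [← sum_neg_distrib, exp_sum]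
    exact prod_le_prod hfactor_nonneg fun i _ => one_sub_le_exp_neg (x i)
  rcases le_or_gt 0 (1 + ∑ i ∈ s, x i) with hS | hS
  · calc (∏ i ∈ s, (1 - x i)) * (1 + ∑ i ∈ s, x i)
        ≤ exp (-∑ i ∈ s, x i) * (1 + ∑ i ∈ s, x i) := mul_le_mul_of_nonneg_right hprod_le_exp hS
      _ ≤ exp (-∑ i ∈ s, x i) * exp (∑ i ∈ s, x i) := by
        gcongr; linarith [add_one_le_exp (∑ i ∈ s, x i)]
      _ = 1 := by rw [← exp_add, neg_add_cancel, exp_zero]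
  · exact (mul_nonpos_of_nonneg_of_nonpos (prod_nonneg hfactor_nonneg) hS.le).trans zero_le_one

/-- After clearing denominators the claim reads `a * (P * (1 + S) - 1) ≤ 0`. -/
lemma one_sub_mul_div_add_le {a S P : ℝ} (ha : 0 ≤ a) (hS : 0 < S) (hPS : P * (1 + S) ≤ 1) :
    (1 - (1 - a) * P) / (a + S) ≤ (1 - P) / S := by
  rw [div_le_div_iff₀ (by linarith) hS]
  nlinarith [mul_nonneg ha (sub_nonneg.2 hPS)]

theorem stmt_7_general (n : ℕ) (α : Fin n → ℝ) (hα : ∀ i, 0 ≤ α i ∧ α i ≤ 1)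
    (I : Finset (Fin n)) (k : Fin n) (hk : k ∈ I)
    (hpos : 0 < ∑ i ∈ I.erase k, α i) :
    (1 - ∏ i ∈ I, (1 - α i)) / (∑ i ∈ I, α i)
      ≤ (1 - ∏ i ∈ I.erase k, (1 - α i)) / (∑ i ∈ I.erase k, α i) := by
  rw [← add_sum_erase I α hk, ← mul_prod_erase I (fun i => 1 - α i) hk]
  exact one_sub_mul_div_add_le (hα k).1 hpos
    (prod_one_sub_mul_one_add_sum_le_one _ α fun i _ => (hα i).2)

theorem stmt_7 (n : ℕ) (α : Fin n → ℝ) (hα : ∀ i, 0 ≤ α i ∧ α i ≤ 1)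
    (I : Finset (Fin n)) (k : Fin n) (hk : k ∈ I)
    (hne : (I.erase k).Nonempty) (hpos : 0 < ∑ i ∈ I.erase k, α i) :
    (1 - ∏ i ∈ I, (1 - α i)) / (∑ i ∈ I, α i)
      ≤ (1 - ∏ i ∈ I.erase k, (1 - α i)) / (∑ i ∈ I.erase k, α i) :=
  stmt_7_general n α hα I k hk hpos
end

section
/- Let (Ω, ℙ) be a probability space, let n ≥ 1 and T ≥ 1 be integers, and let α_1,…,α_n ∈ [0,1] with Σ_{i=1}^n α_i = 1. For each t ∈ {1,…,T} let V_1^t,…,V_n^t : Ω → {0,1} be mutually independent random variables (independent across i for each fixed t) with ℙ(V_i^t = 1) = α_i, and let X_1^t,…,X_n^t : Ω → {0,1} be arbitrary random variables satisfying Σ_{i=1}^n X_i^t ≤ 1 pointwise. If λ ∈ ℝ satisfies (1/T)·Σ_{t=1}^T 𝔼[V_i^t X_i^t] ≥ λ·α_i for every i ∈ {1,…,n}, then λ ≤ 1 − ∏_{j=1}^n (1−α_j). -/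
open MeasureTheory ProbabilityTheory

/-!
In every round the total realised value `∑ i, V i * X i` is at most `1` (one item) and vanishes
when all values are `0`, so it is dominated by the indicator that some value is `1`; by
independence that event has probability `1 - ∏ j, (1 - α j)`. Weighting the hypotheses by
`α i` (which sum to `1`) and averaging over the rounds gives the bound on `lam`.
-/

lemma sum_mul_le_indicator {Ω ι : Type*} [Fintype ι] {V X : ι → Ω → ℝ}
    (hV01 : ∀ i ω, V i ω = 0 ∨ V i ω = 1) (hX : ∀ i ω, 0 ≤ X i ω)
    (hone : ∀ ω, ∑ i, X i ω ≤ 1) (ω : Ω) :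
    ∑ i, V i ω * X i ω ≤ {ω | ∀ i, V i ω = 0}ᶜ.indicator 1 ω := by
  by_cases hω : ∀ i, V i ω = 0
  · simp [hω]
  · rw [Set.indicator_of_mem (by simpa using hω), Pi.one_apply]
    calc ∑ i, V i ω * X i ω ≤ ∑ i, X i ω := Finset.sum_le_sum fun i _ => by
          rcases hV01 i ω with h | h <;> simp [h, hX i ω]
      _ ≤ 1 := hone ω

section

variable {Ω ι : Type*} [MeasurableSpace Ω] {P : Measure Ω} [Fintype ι]

/-- Non-integrable `f i` have integral `0`, so no measurability of the `f i` is needed. -/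
lemma sum_integral_le_integral_of_sum_le {f : ι → Ω → ℝ} {g : Ω → ℝ}
    (hf : ∀ i, 0 ≤ f i) (hg : Integrable g P) (hfg : ∀ ω, ∑ i, f i ω ≤ g ω) :
    ∑ i, ∫ ω, f i ω ∂P ≤ ∫ ω, g ω ∂P := by
  classical
  set S := Finset.univ.filter fun i => Integrable (f i) P
  have hS : ∑ i, ∫ ω, f i ω ∂P = ∑ i ∈ S, ∫ ω, f i ω ∂P :=
    (Finset.sum_filter_of_ne fun i _ hi => not_not.1 fun h => hi (integral_undef h)).symm
  rw [hS, ← integral_finsetSum S fun i hi => (Finset.mem_filter.1 hi).2]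
  refine integral_mono_of_nonneg (.of_forall fun ω => Finset.sum_nonneg fun i _ => hf i ω) hg
    (.of_forall fun ω => (Finset.sum_le_sum_of_subset_of_nonneg (Finset.subset_univ S)
      fun i _ _ => hf i ω).trans (hfg ω))

lemma measureReal_forall_eq_zero_eq_prod [IsProbabilityMeasure P] {V : ι → Ω → ℝ}
    (hmeas : ∀ i, Measurable (V i)) (h01 : ∀ i ω, V i ω = 0 ∨ V i ω = 1)
    (hindep : iIndepFun V P) :
    P.real {ω | ∀ i, V i ω = 0} = ∏ i, (1 - P.real {ω | V i ω = 1}) := by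
  have hcompl : ∀ i, {ω | V i ω = 0} = {ω | V i ω = 1}ᶜ := fun i => by
    ext ω
    rcases h01 i ω with h | h <;> simp [h]
  have hinter : {ω | ∀ i, V i ω = 0} = ⋂ i ∈ Finset.univ, V i ⁻¹' {0} := by
    ext; simp
  rw [hinter, measureReal_def, hindep.measure_inter_preimage_eq_mul Finset.univ
    fun _ _ => measurableSet_singleton 0, ENNReal.toReal_prod]
  refine Finset.prod_congr rfl fun i _ => ?_
  rw [← measureReal_def, ← probReal_compl_eq_one_sub (s := {ω | V i ω = 1})
    (hmeas i (measurableSet_singleton 1)), ← hcompl i]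
  rfl

lemma sum_integral_mul_le_one_sub_prod [IsProbabilityMeasure P] {V X : ι → Ω → ℝ}
    (hVmeas : ∀ i, Measurable (V i)) (hV01 : ∀ i ω, V i ω = 0 ∨ V i ω = 1)
    (hindep : iIndepFun V P) (hX : ∀ i ω, 0 ≤ X i ω) (hone : ∀ ω, ∑ i, X i ω ≤ 1) :
    ∑ i, ∫ ω, V i ω * X i ω ∂P ≤ 1 - ∏ i, (1 - P.real {ω | V i ω = 1}) := by
  have hA : MeasurableSet {ω | ∀ i, V i ω = 0} := by
    rw [Set.ofPred_forall]
    exact .iInter fun i => hVmeas i (measurableSet_singleton 0)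
  have hVX : ∀ i, 0 ≤ fun ω => V i ω * X i ω := fun i ω => by
    rcases hV01 i ω with h | h <;> simp [h, hX i ω]
  calc ∑ i, ∫ ω, V i ω * X i ω ∂P ≤ ∫ ω, {ω | ∀ i, V i ω = 0}ᶜ.indicator 1 ω ∂P :=
        sum_integral_le_integral_of_sum_le hVX ((integrable_const 1).indicator hA.compl)
          (sum_mul_le_indicator hV01 hX hone)
    _ = 1 - ∏ i, (1 - P.real {ω | V i ω = 1}) := by
        rw [integral_indicator_one hA.compl, probReal_compl_eq_one_sub hA,
          measureReal_forall_eq_zero_eq_prod hVmeas hV01 hindep]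

end

theorem stmt_8_general (Ω : Type*) [MeasurableSpace Ω] (P : Measure Ω) [IsProbabilityMeasure P]
    (n T : ℕ) (hT : 1 ≤ T)
    (α : Fin n → ℝ) (hsum : ∑ i, α i = 1)
    (V X : Fin T → Fin n → Ω → ℝ)
    (hVmeas : ∀ t i, Measurable (V t i))
    (hV01 : ∀ t i ω, V t i ω = 0 ∨ V t i ω = 1)
    (hX01 : ∀ t i ω, X t i ω = 0 ∨ X t i ω = 1)
    (hindep : ∀ t, iIndepFun (fun i => V t i) P)
    (hBer : ∀ t i, (P {ω | V t i ω = 1}).toReal = α i)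
    (hone : ∀ t ω, ∑ i, X t i ω ≤ 1)
    (lam : ℝ)
    (hlam : ∀ i, lam * α i ≤ (1 / (T : ℝ)) * ∑ t, ∫ ω, V t i ω * X t i ω ∂P) :
    lam ≤ 1 - ∏ j, (1 - α j) := by
  have hround (t : Fin T) : ∑ i, ∫ ω, V t i ω * X t i ω ∂P ≤ 1 - ∏ j, (1 - α j) := by
    have hX (i ω) : 0 ≤ X t i ω := by rcases hX01 t i ω with h | h <;> simp [h]
    have hα (i) : P.real {ω | V t i ω = 1} = α i := hBer t i
    simpa only [hα] using
      sum_integral_mul_le_one_sub_prod (hVmeas t) (hV01 t) (hindep t) hX (hone t)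
  have hT0 : (T : ℝ) ≠ 0 := Nat.cast_ne_zero.2 (by omega)
  calc lam = ∑ i, lam * α i := by rw [← Finset.mul_sum, hsum, mul_one]
    _ ≤ ∑ i, 1 / (T : ℝ) * ∑ t, ∫ ω, V t i ω * X t i ω ∂P := Finset.sum_le_sum fun i _ => hlam i
    _ = 1 / (T : ℝ) * ∑ t, ∑ i, ∫ ω, V t i ω * X t i ω ∂P := by
        rw [← Finset.mul_sum, Finset.sum_comm]
    _ ≤ 1 / (T : ℝ) * ∑ _t : Fin T, (1 - ∏ j, (1 - α j)) := by gcongr with t; exact hround t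
    _ = 1 - ∏ j, (1 - α j) := by
        rw [Finset.sum_const, Finset.card_univ, Fintype.card_fin, nsmul_eq_mul]
        field_simp

theorem stmt_8 (Ω : Type*) [MeasurableSpace Ω] (P : Measure Ω) [IsProbabilityMeasure P]
    (n T : ℕ) (hn : 1  ≤ n) (hT : 1 ≤ T)
    (α : Fin n → ℝ) (hα : ∀ i, 0 ≤ α i ∧ α i ≤ 1) (hsum : ∑ i, α i = 1)
    (V X : Fin T → Fin n → Ω → ℝ)
    (hVmeas : ∀ t i, Measurable (V t i))
    (hXmeas : ∀ t i, Measurable (X t i))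
    (hV01 : ∀ t i ω, V t i ω = 0 ∨ V t i ω = 1)
    (hX01 : ∀ t i ω, X t i ω = 0 ∨ X t i ω = 1)
    (hindep : ∀ t, iIndepFun (fun i => V t i) P)
    (hBer : ∀ t i, (P {ω | V t i ω = 1}).toReal = α i)
    (hone : ∀ t ω, ∑ i, X t i ω ≤ 1)
    (lam : ℝ)
    (hlam : ∀ i, lam * α i ≤ (1 / (T : ℝ)) * ∑ t, ∫ ω, V t i ω * X t i ω ∂P) :
    lam ≤ 1 - ∏ j, (1 - α j) :=
  stmt_8_general Ω P n T hT α hsum V X hVmeas hV01 hX01 hindep hBer hone lam hlam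
end

section
/- Let m ≥ 1 be an integer, and define g(X) = (1 − X/m)^m · (mX² + 2mX + 2m − 2X² − 2X) / (2(m − X)). Then g(0) = 1 and g is nonincreasing on the set {X : 0 ≤ X ≤ 1 and X < m}; that is, for all real numbers 0 ≤ X₁ ≤ X₂ ≤ 1 with X₂ < m (which is automatic when m ≥ 2), g(X₂) ≤ g(X₁). In particular, g(X) ≤ 1 for all X ∈ [0,1] with X < m. -/
/-!
Write `m = n + 1`. For `X < m` the factor `m - X` cancels, so `g X` is the positive multiple
`1 / (2 m^m)` of `(m - X)^n · P(X)` with `P(X) = (n - 1) X² + 2 n X + 2 m`. The derivative of this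
product is `-(m - X)^(n-1) · X · ((n - 1)(n + 2) X + 2 m)`, nonpositive on `[0, m]`; and `g 0 = 1`.
-/

open Set

def scaledG (n : ℕ) (X : ℝ) : ℝ :=
  (n + 1 - X) ^ n * ((n - 1) * X ^ 2 + 2 * n * X + 2 * (n + 1))

lemma hasDerivAt_scaledG (n : ℕ) (x : ℝ) :
    HasDerivAt (scaledG n)
      (n * (n + 1 - x) ^ (n - 1) * (-1) * ((n - 1) * x ^ 2 + 2 * n * x + 2 * (n + 1))
        + (n + 1 - x) ^ n * (2 * (n - 1) * x + 2 * n)) x := by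
  have hpoly : HasDerivAt (fun X : ℝ => (n - 1) * X ^ 2 + 2 * n * X + 2 * (n + 1))
      (2 * (n - 1) * x + 2 * n) x := by
    refine ((((hasDerivAt_pow 2 x).const_mul ((n : ℝ) - 1)).add
      ((hasDerivAt_id' x).const_mul (2 * (n : ℝ)))).add_const (2 * ((n : ℝ) + 1))).congr_deriv ?_
    push_cast; ring
  exact (((hasDerivAt_id x).const_sub ((n : ℝ) + 1)).pow n).mul hpoly

lemma scaledG_deriv_nonpos (n : ℕ) {x : ℝ} (hx₀ : 0 ≤ x) (hx : x ≤ n + 1) :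
    n * (n + 1 - x) ^ (n - 1) * (-1) * ((n - 1) * x ^ 2 + 2 * n * x + 2 * (n + 1))
      + (n + 1 - x) ^ n * (2 * (n - 1) * x + 2 * n) ≤ 0 := by
  cases n with
  | zero => norm_num [hx₀]
  | succ k =>
    simp only [Nat.add_sub_cancel, pow_succ]
    push_cast at hx ⊢
    have key : 0 ≤ (k + 2 - x) ^ k * (x * (k * (k + 3) * x + 2 * (k + 2))) :=
      mul_nonneg (pow_nonneg (by linarith) k) (mul_nonneg hx₀ (by positivity))
    linear_combination key

lemma antitoneOn_scaledG (n : ℕ) : AntitoneOn (scaledG n) (Icc 0 (n + 1)) := by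
  refine antitoneOn_of_hasDerivWithinAt_nonpos (convex_Icc _ _)
    (fun x _ => (hasDerivAt_scaledG n x).continuousAt.continuousWithinAt)
    (fun x _ => (hasDerivAt_scaledG n x).hasDerivWithinAt) fun x hx => ?_
  rw [interior_Icc] at hx
  exact scaledG_deriv_nonpos n hx.1.le hx.2.le

lemma pow_mul_div_eq_scaledG (n : ℕ) {X : ℝ} (hX : X < n + 1) :
    (1 - X / (n + 1)) ^ (n + 1) *
        ((n + 1) * X ^ 2 + 2 * (n + 1) * X + 2 * (n + 1) - 2 * X ^ 2 - 2 * X) / (2 * (n + 1 - X))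
      = scaledG n X / (2 * (n + 1) ^ (n + 1)) := by
  have hX' : (n : ℝ) + 1 - X ≠ 0 := by linarith
  rw [scaledG, one_sub_div (by positivity), div_pow, pow_succ]
  field_simp
  ring

lemma scaledG_zero (n : ℕ) : scaledG n 0 = 2 * (n + 1) ^ (n + 1) := by
  rw [scaledG]; ring

theorem stmt_13 (m : ℕ) (hm : 1 ≤ m) (g : ℝ → ℝ)
    (hg : ∀ X : ℝ, g X = (1 - X / m) ^ m *
      (m * X ^ 2 + 2 * m * X + 2 * m - 2 * X ^ 2 - 2 * X) / (2 * (m - X))) :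
    g 0 = 1 ∧
    (∀ X₁ X₂ : ℝ, 0 ≤ X₁ → X₁ ≤ X₂ → X₂ ≤ 1 → X₂ < m → g X₂ ≤ g X₁) ∧
    (∀ X : ℝ, 0 ≤ X → X ≤ 1 → X < m → g X ≤ 1) := by
  obtain ⟨n, rfl⟩ : ∃ n, m = n + 1 := ⟨m - 1, by omega⟩
  push_cast at hg ⊢
  have hg_eq : ∀ X : ℝ, X < n + 1 → g X = scaledG n X / (2 * (n + 1) ^ (n + 1)) := fun X hX =>
    (hg X).trans (pow_mul_div_eq_scaledG n hX)
  have hg₀ : g 0 = 1 := by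
    rw [hg_eq 0 (by positivity), scaledG_zero]
    exact div_self (by positivity)
  have hanti : ∀ X₁ X₂ : ℝ, 0 ≤ X₁ → X₁ ≤ X₂ → X₂ < n + 1 → g X₂ ≤ g X₁ := by
    intro X₁ X₂ h₀ h₁₂ h₂
    rw [hg_eq X₂ h₂, hg_eq X₁ (h₁₂.trans_lt h₂)]
    gcongr ?_ / _
    exact antitoneOn_scaledG n ⟨h₀, h₁₂.trans h₂.le⟩ ⟨h₀.trans h₁₂, h₂.le⟩ h₁₂
  exact ⟨hg₀, fun X₁ X₂ h₀ h₁₂ _ h₂ => hanti X₁ X₂ h₀ h₁₂ h₂,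
    fun X h₀ _ hX => hg₀ ▸ hanti 0 X le_rfl h₀ hX⟩
end

section
/- Let m ≥ 1 be an integer and let X ∈ [0,1] be a real number with X < m. Then (1 − X²(mX + m − 2X)/(2(m − X)))·(1 − X/m)^m + X ≤ 1. -/
/-!
Write `Q = mX² + 2mX + 2m − 2X² − 2X`, so that the coefficient of `(1 − X/m)^m` equals
`(1 − X) Q / (2(m − X))`. It then suffices to show `Q (1 − X/m)^m ≤ 2(m − X)`. Bounding
`(1 − y)^m` by its binomial expansion truncated after the quartic term (alternating
truncations of even length overestimate it on `[0, 1]`) reduces this to a polynomial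
inequality in `m` and `X`.
-/

noncomputable def binomTruncFour (a y : ℝ) : ℝ :=
  1 - a * y + a * (a - 1) / 2 * y ^ 2 - a * (a - 1) * (a - 2) / 6 * y ^ 3
    + a * (a - 1) * (a - 2) * (a - 3) / 24 * y ^ 4

lemma descFactorial_four_cast_nonneg (n : ℕ) : (0 : ℝ) ≤ n * (n - 1) * (n - 2) * (n - 3) := by
  rcases lt_or_ge n 3 with hn | hn
  · interval_cases n <;> norm_num
  · have hn' : (3 : ℝ) ≤ n := by exact_mod_cast hn
    have h3 : (0 : ℝ) ≤ n - 3 := by linarith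
    have h2 : (0 : ℝ) ≤ n - 2 := by linarith
    have h1 : (0 : ℝ) ≤ n - 1 := by linarith
    positivity

lemma one_sub_pow_le_binomTruncFour (m : ℕ) {y : ℝ} (h0 : 0 ≤ y) (h1 : y ≤ 1) :
    (1 - y) ^ m ≤ binomTruncFour m y := by
  induction m with
  | zero => simp [binomTruncFour]
  | succ n ih =>
    have step : binomTruncFour (n + 1 : ℕ) y - (1 - y) * binomTruncFour n y
        = n * (n - 1) * (n - 2) * (n - 3) / 24 * y ^ 5 := by
      simp only [binomTruncFour, Nat.cast_succ]; ring
    have hrem : 0 ≤ (n : ℝ) * (n - 1) * (n - 2) * (n - 3) / 24 * y ^ 5 := by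
      have := descFactorial_four_cast_nonneg n
      positivity
    calc (1 - y) ^ (n + 1) = (1 - y) * (1 - y) ^ n := pow_succ' _ _
      _ ≤ (1 - y) * binomTruncFour n y := by gcongr
      _ ≤ binomTruncFour (n + 1 : ℕ) y := by linarith

lemma binomTruncFour_div_mul (a X : ℝ) (ha : a ≠ 0) :
    binomTruncFour a (X / a) * (24 * a ^ 3) =
      24 * a ^ 3 - 24 * a ^ 3 * X + 12 * a ^ 2 * (a - 1) * X ^ 2
        - 4 * a * (a - 1) * (a - 2) * X ^ 3 + (a - 1) * (a - 2) * (a - 3) * X ^ 4 := by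
  simp only [binomTruncFour]
  field_simp
  ring

/- With `a = 1 + b`, the difference of the two sides is `X²` times a polynomial in `b` whose
coefficients are nonnegative for `X ∈ [0, 1]`; the hints are these coefficients. -/
lemma quartic_poly_mul_le (a X : ℝ) (ha : 1 ≤ a) (h0 : 0 ≤ X) (h1 : X ≤ 1) :
    (24 * a ^ 3 - 24 * a ^ 3 * X + 12 * a ^ 2 * (a - 1) * X ^ 2
        - 4 * a * (a - 1) * (a - 2) * X ^ 3 + (a - 1) * (a - 2) * (a - 3) * X ^ 4)
      * (a * X ^ 2 + 2 * a * X + 2 * a - 2 * X ^ 2 - 2 * X) ≤ 48 * a ^ 3 * (a - X) := by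
  obtain ⟨b, hb, rfl⟩ : ∃ b, 0 ≤ b ∧ a = 1 + b := ⟨a - 1, by linarith, by ring⟩
  have hX2 : 0 ≤ X ^ 2 := sq_nonneg X
  have hX3 : X ^ 3 ≤ X := by nlinarith
  have hX4 : X ^ 4 ≤ X := by nlinarith
  have hA : 0 ≤ 72 - 56 * X + 8 * X ^ 2 + 4 * X ^ 3 + 2 * X ^ 4 := by nlinarith
  have hB : 0 ≤ 72 - 32 * X + 6 * X ^ 2 - 8 * X ^ 3 - 5 * X ^ 4 := by nlinarith
  have hC : 0 ≤ 24 + 8 * X - 8 * X ^ 2 + 2 * X ^ 3 + 4 * X ^ 4 := by nlinarith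
  have hD : 0 ≤ X * (8 - 6 * X + 2 * X ^ 2 - X ^ 3) := by nlinarith
  nlinarith [mul_nonneg (mul_nonneg hX2 hb) hA,
    mul_nonneg (mul_nonneg hX2 (pow_nonneg hb 2)) hB,
    mul_nonneg (mul_nonneg hX2 (pow_nonneg hb 3)) hC,
    mul_nonneg (mul_nonneg hX2 (pow_nonneg hb 4)) hD,
    mul_nonneg hX2 (sub_nonneg.2 h1)]

lemma one_sub_div_pow_mul_le (m : ℕ) (hm : 1 ≤ m) {X : ℝ} (h0 : 0 ≤ X) (h1 : X ≤ 1) :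
    (1 - X / m) ^ m * (m * X ^ 2 + 2 * m * X + 2 * m - 2 * X ^ 2 - 2 * X) ≤ 2 * (m - X) := by
  have hm' : (1 : ℝ) ≤ m := by exact_mod_cast hm
  have hm0 : (0 : ℝ) < m := by linarith
  have hQ : 0 ≤ (m : ℝ) * X ^ 2 + 2 * m * X + 2 * m - 2 * X ^ 2 - 2 * X := by nlinarith
  have hy1 : X / m ≤ 1 := by rw [div_le_one hm0]; linarith
  have htrunc := one_sub_pow_le_binomTruncFour m (div_nonneg h0 hm0.le) hy1
  have hpoly : binomTruncFour m (X / m) * (m * X ^ 2 + 2 * m * X + 2 * m - 2 * X ^ 2 - 2 * X)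
      ≤ 2 * (m - X) := by
    have hpos : (0 : ℝ) < 24 * m ^ 3 := by positivity
    have := binomTruncFour_div_mul m X hm0.ne'
    nlinarith [quartic_poly_mul_le m X hm' h0 h1]
  exact (mul_le_mul_of_nonneg_right htrunc hQ).trans hpoly

theorem stmt_14 (m : ℕ) (hm : 1 ≤ m) (X : ℝ) (hX0 : 0 ≤ X) (hX1 : X ≤ 1) (hXm : X < m) :
    (1 - X ^ 2 * (m * X + m - 2 * X) / (2 * (m - X))) * (1 - X / m) ^ m + X ≤ 1 := by
  have hden : (0 : ℝ) < 2 * (m - X) := by linarith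
  have hmX : (m : ℝ) - X ≠ 0 := by linarith
  have hcoef : 1 - X ^ 2 * (m * X + m - 2 * X) / (2 * (m - X))
      = (1 - X) * ((m * X ^ 2 + 2 * m * X + 2 * m - 2 * X ^ 2 - 2 * X) / (2 * (m - X))) := by
    field_simp
    ring
  have hg : (m * X ^ 2 + 2 * m * X + 2 * m - 2 * X ^ 2 - 2 * X) / (2 * (m - X)) * (1 - X / m) ^ m
      ≤ 1 := by
    rw [div_mul_eq_mul_div, div_le_one hden, mul_comm]
    exact one_sub_div_pow_mul_le m hm hX0 hX1
  rw [hcoef, mul_assoc]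
  nlinarith [mul_le_mul_of_nonneg_left hg (sub_nonneg.2 hX1)]
end

section
/- Let I and J be nonempty finite index sets with m = |I|, let X ∈ [0,1], let x : I → [0,1) with Σ_{i∈I} x_i = X, and let y : J → [0,1] with Σ_{j∈J} y_j = 1−X. Define f(x,y) = (1 − ∏_{i∈I}(1−x_i)·∏_{j∈J}(1−y_j))·X + ∏_{i∈I}(1−x_i) + (1/2)·(∏_{i∈I}(1−x_i))·(∏_{j∈J}(1−y_j))·(Σ_{i∈I} x_i/(1−x_i))·(1−X). Then f(x,y) ≤ (1 − X²(mX + m − 2X)/(2(m − X)))·(1 − X/m)^m + X. -/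
/-!
Put `P = ∏ (1 - x i)`, `Q = ∏ (1 - y j)` and `S = ∑ x i / (1 - x i)`. The left side is affine in
`Q` with slope `P (S (1 - X) / 2 - X) ≤ 0`, because `x i ≤ X` gives `S (1 - X) ≤ X`; by the
Weierstrass product inequality `Q ≥ 1 - ∑ y j = X`, so we may take `Q = X`.

With `u i = 1 - x i`, `b = X (1 - X) / 2` and `α = 1 - X² - m b`, what remains is
`X + ∏ u i * (α + b ∑ (u i)⁻¹)`. Let `t = 1 - X / m` be the mean of the `u i`. Since
`α + b (m - 2) = 1 - X ≥ 0`, replacing a pair `u a < t < u c` by `t, u a + u c - t` keeps the sum,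
raises the pair product and hence the expression; after at most `m` such steps all `u i = t`.
-/

open Finset Function

theorem Finset.one_sub_sum_le_prod_one_sub_s15 {ι R : Type*} [CommRing R] [LinearOrder R]
    [IsStrictOrderedRing R] (s : Finset ι) {f : ι → R} (h0 : ∀ i ∈ s, 0 ≤ f i)
    (h1 : ∀ i ∈ s, f i ≤ 1) : 1 - ∑ i ∈ s, f i ≤ ∏ i ∈ s, (1 - f i) := by
  classical
  induction s using Finset.induction_on with
  | empty => simp
  | insert a s ha ih =>
    rw [prod_insert ha, sum_insert ha]
    have ha0 := h0 a (mem_insert_self a s)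
    have ha1 := h1 a (mem_insert_self a s)
    have hs0 : 0 ≤ ∑ i ∈ s, f i := sum_nonneg fun i hi ↦ h0 i (mem_insert_of_mem hi)
    have ih := ih (fun i hi ↦ h0 i (mem_insert_of_mem hi)) (fun i hi ↦ h1 i (mem_insert_of_mem hi))
    nlinarith [mul_le_mul_of_nonneg_left ih (sub_nonneg.2 ha1)]

theorem Finset.sum_div_one_sub_mul_one_sub_sum_le {ι : Type*} (s : Finset ι) {x : ι → ℝ}
    (h0 : ∀ i ∈ s, 0 ≤ x i) (h1 : ∀ i ∈ s, x i < 1) :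
    (∑ i ∈ s, x i / (1 - x i)) * (1 - ∑ i ∈ s, x i) ≤ ∑ i ∈ s, x i := by
  rw [sum_mul]
  refine sum_le_sum fun i hi ↦ ?_
  have hpos : 0 < 1 - x i := sub_pos.2 (h1 i hi)
  have hle : x i ≤ ∑ j ∈ s, x j := single_le_sum h0 hi
  rw [div_mul_eq_mul_div, div_le_iff₀ hpos]
  nlinarith [h0 i hi]

@[to_additive]
theorem Fintype.prod_eq_mul_mul_prod_compl_pair {I M : Type*} [Fintype I] [DecidableEq I]
    [CommMonoid M] {a c : I} (hac : a ≠ c) (f : I → M) :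
    ∏ i, f i = f a * f c * ∏ i ∈ {a, c}ᶜ, f i := by
  rw [← prod_mul_prod_compl {a, c} f, prod_pair hac]

theorem exists_lt_and_exists_gt_of_sum_eq {I : Type*} [Fintype I] {u : I → ℝ} {t : ℝ}
    (hsum : ∑ i, u i = Fintype.card I * t) (hne : ∃ i, u i ≠ t) :
    (∃ a, u a < t) ∧ ∃ c, t < u c := by
  obtain ⟨i, hi⟩ := hne
  have hconst : ∑ _i : I, t = ∑ i, u i := by simp [hsum]
  constructor
  · by_contra! h
    exact hi ((sum_eq_sum_iff_of_le fun i _ ↦ h i).1 hconst i (mem_univ i)).symm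
  · by_contra! h
    exact hi ((sum_eq_sum_iff_of_le fun i _ ↦ h i).1 hconst.symm i (mem_univ i))

section Smoothing

variable {I : Type*} [DecidableEq I]

def smoothPair (u : I → ℝ) (a c : I) (t : ℝ) : I → ℝ :=
  update (update u a t) c (u a + u c - t)

variable {u : I → ℝ} {a c : I} {t : ℝ}

theorem smoothPair_apply_left (hac : a ≠ c) : smoothPair u a c t a = t := by
  simp [smoothPair, hac]

theorem smoothPair_apply_right : smoothPair u a c t c = u a + u c - t := by
  simp [smoothPair]

theorem smoothPair_apply_of_ne {i : I} (hia : i ≠ a) (hic : i ≠ c) :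
    smoothPair u a c t i = u i := by
  simp [smoothPair, hia, hic]

variable [Fintype I]

theorem smoothPair_eqOn_compl_pair : ∀ i ∈ ({a, c}ᶜ : Finset I), smoothPair u a c t i = u i := by
  intro i hi
  simp only [mem_compl, mem_insert, mem_singleton, not_or] at hi
  exact smoothPair_apply_of_ne hi.1 hi.2

theorem sum_smoothPair (hac : a ≠ c) : ∑ i, smoothPair u a c t i = ∑ i, u i := by
  rw [Fintype.sum_eq_add_add_sum_compl_pair hac, Fintype.sum_eq_add_add_sum_compl_pair hac u,
    smoothPair_apply_left hac, smoothPair_apply_right, sum_congr rfl smoothPair_eqOn_compl_pair]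
  ring

theorem le_apply_const_of_le_smoothPair (F : (I → ℝ) → ℝ) (S : Set (I → ℝ))
    (hstep : ∀ u ∈ S, ∀ a c, u a < t → t < u c →
      smoothPair u a c t ∈ S ∧ F u ≤ F (smoothPair u a c t))
    (hu : u ∈ S) (hsum : ∑ i, u i = Fintype.card I * t) : F u ≤ F fun _ ↦ t := by
  induction hn : #{i | u i ≠ t} using Nat.strong_induction_on generalizing u with
  | _ n ih =>
  by_cases hconst : ∀ i, u i = t
  · rw [show u = fun _ ↦ t from funext hconst]
  simp only [not_forall] at hconst
  obtain ⟨⟨a, ha⟩, ⟨c, hc⟩⟩ := exists_lt_and_exists_gt_of_sum_eq hsum hconst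
  have hac : a ≠ c := by rintro rfl; linarith
  obtain ⟨hS, hle⟩ := hstep u hu a c ha hc
  refine hle.trans (ih _ ?_ hS ((sum_smoothPair hac).trans hsum) rfl)
  rw [← hn]
  refine card_lt_card ((ssubset_iff_of_subset ?_).2 ⟨a, by simp [ha.ne], by
    simp [smoothPair_apply_left hac]⟩)
  intro i hi
  simp only [mem_filter, mem_univ, true_and] at hi ⊢
  rcases eq_or_ne i a with rfl | hia
  · exact absurd (smoothPair_apply_left hac) hi
  rcases eq_or_ne i c with rfl | hic
  · exact hc.ne'
  rwa [smoothPair_apply_of_ne hia hic] at hi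

end Smoothing

section ProductBound

variable {I : Type*} [Fintype I] [DecidableEq I] {α b t : ℝ}

theorem prod_mul_add_sum_inv_le_smoothPair (hb : 0 ≤ b)
    (hαb : 0 ≤ α + b * (Fintype.card I - 2)) {u : I → ℝ} (hu : ∀ i, u i ∈ Set.Ioc 0 1)
    {a c : I} (hac : a ≠ c) (ha : u a < t) (hc : t < u c) (ht : 0 < t) :
    (∏ i, u i) * (α + b * ∑ i, (u i)⁻¹) ≤
      (∏ i, smoothPair u a c t i) * (α + b * ∑ i, (smoothPair u a c t i)⁻¹) := by
  set R := ∏ i ∈ {a, c}ᶜ, u i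
  set V := ∑ i ∈ {a, c}ᶜ, (u i)⁻¹
  have hsplit : ∀ v : I → ℝ, (∀ i ∈ ({a, c}ᶜ : Finset I), v i = u i) → v a ≠ 0 → v c ≠ 0 →
      (∏ i, v i) * (α + b * ∑ i, (v i)⁻¹) = v a * v c * R * (α + b * V) + b * R * (v a + v c) := by
    intro v hv hva hvc
    rw [Fintype.prod_eq_mul_mul_prod_compl_pair hac, Fintype.sum_eq_add_add_sum_compl_pair hac,
      show ∏ i ∈ {a, c}ᶜ, v i = R from prod_congr rfl hv,
      show ∑ i ∈ {a, c}ᶜ, (v i)⁻¹ = V from sum_congr rfl fun i hi ↦ by rw [hv i hi]]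
    field_simp
    ring
  have hR : 0 ≤ R := prod_nonneg fun i _ ↦ (hu i).1.le
  have hV : (Fintype.card I : ℝ) - 2 ≤ V := by
    have hcard : #({a, c}ᶜ : Finset I) + 2 = Fintype.card I := by
      rw [← card_pair hac, card_compl_add_card]
    have := card_nsmul_le_sum {a, c}ᶜ (fun i ↦ (u i)⁻¹) 1
      fun i _ ↦ (one_le_inv₀ (hu i).1).2 (hu i).2
    rw [nsmul_eq_mul, mul_one] at this
    rw [← hcard]
    push_cast
    linarith
  have hK : 0 ≤ α + b * V := by nlinarith
  rw [hsplit u (fun _ _ ↦ rfl) (hu a).1.ne' (hu c).1.ne',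
    hsplit _ smoothPair_eqOn_compl_pair (by rw [smoothPair_apply_left hac]; exact ht.ne')
      (by rw [smoothPair_apply_right]; linarith [(hu a).1]),
    smoothPair_apply_left hac, smoothPair_apply_right]
  -- The pair sum is unchanged while the pair product grows by `(t - u a) * (u c - t)`.
  nlinarith [mul_nonneg (mul_nonneg (sub_nonneg.2 ha.le) (sub_nonneg.2 hc.le)) (mul_nonneg hR hK)]

theorem prod_mul_add_sum_inv_le (hb : 0 ≤ b) (hαb : 0 ≤ α + b * (Fintype.card I - 2))
    (ht : t ∈ Set.Ioc 0 1) {u : I → ℝ} (hu : ∀ i, u i ∈ Set.Ioc 0 1)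
    (hsum : ∑ i, u i = Fintype.card I * t) :
    (∏ i, u i) * (α + b * ∑ i, (u i)⁻¹) ≤
      t ^ Fintype.card I * (α + b * (Fintype.card I * t⁻¹)) := by
  have hstep : ∀ v ∈ {v : I → ℝ | ∀ i, v i ∈ Set.Ioc 0 1}, ∀ a c, v a < t → t < v c →
      smoothPair v a c t ∈ {v : I → ℝ | ∀ i, v i ∈ Set.Ioc 0 1} ∧
      (∏ i, v i) * (α + b * ∑ i, (v i)⁻¹) ≤
        (∏ i, smoothPair v a c t i) * (α + b * ∑ i, (smoothPair v a c t i)⁻¹) := by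
    intro v hv a c ha hc
    have hac : a ≠ c := by rintro rfl; linarith
    refine ⟨fun i ↦ ?_, prod_mul_add_sum_inv_le_smoothPair hb hαb hv hac ha hc ht.1⟩
    rcases eq_or_ne i a with rfl | hia
    · rwa [smoothPair_apply_left hac]
    rcases eq_or_ne i c with rfl | hic
    · rw [smoothPair_apply_right]
      constructor <;> linarith [(hv i).1, (hv i).2, (hv a).1]
    · rw [smoothPair_apply_of_ne hia hic]
      exact hv i
  simpa using le_apply_const_of_le_smoothPair _ _ hstep hu hsum

end ProductBound

theorem stmt_15_general (I J : Type*) [Fintype I] [Fintype J] [Nonempty I]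
    (m : ℕ) (hm : m = Fintype.card I)
    (X : ℝ) (hX0 : 0 ≤ X) (hX1 : X ≤ 1)
    (x : I → ℝ) (hx : ∀ i, 0 ≤ x i ∧ x i < 1) (hxsum : ∑ i, x i = X)
    (y : J → ℝ) (hy : ∀ j, 0 ≤ y j ∧ y j ≤ 1) (hysum : ∑ j, y j = 1 - X) :
    (1 - (∏ i, (1 - x i)) * ∏ j, (1 - y j)) * X
      + (∏ i, (1 - x i))
      + (1 / 2) * (∏ i, (1 - x i)) * (∏ j, (1 - y j)) * (∑ i, x i / (1 - x i)) * (1 - X)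
    ≤ (1 - X ^ 2 * (m * X + m - 2 * X) / (2 * (m - X))) * (1 - X / m) ^ m + X := by
  classical
  set P := ∏ i, (1 - x i)
  set S := ∑ i, x i / (1 - x i)
  have hXm : X < m := by
    calc X = ∑ i, x i := hxsum.symm
      _ < ∑ _i : I, (1 : ℝ) := sum_lt_sum_of_nonempty univ_nonempty fun i _ ↦ (hx i).2
      _ = m := by simp [hm]
  have hm0 : (0 : ℝ) < m := hX0.trans_lt hXm
  have hQ : X ≤ ∏ j, (1 - y j) := by
    simpa [hysum] using one_sub_sum_le_prod_one_sub_s15 univ (fun j _ ↦ (hy j).1) fun j _ ↦ (hy j).2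
  have hS : S * (1 - X) ≤ X := by
    simpa [hxsum] using
      sum_div_one_sub_mul_one_sub_sum_le univ (fun i _ ↦ (hx i).1) fun i _ ↦ (hx i).2
  have hSinv : S = ∑ i, (1 - x i)⁻¹ - m := by
    rw [hm, ← Finset.card_univ, ← nsmul_one, ← sum_const, ← sum_sub_distrib]
    refine sum_congr rfl fun i _ ↦ ?_
    field_simp [(sub_pos.2 (hx i).2).ne']
    ring
  have hP : 0 ≤ P := prod_nonneg fun i _ ↦ sub_nonneg.2 (hx i).2.le
  have hcore := prod_mul_add_sum_inv_le (α := 1 - X ^ 2 - m * (X * (1 - X) / 2))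
    (b := X * (1 - X) / 2) (t := 1 - X / m) (u := fun i ↦ 1 - x i)
    (by nlinarith) (by rw [← hm]; nlinarith)
    ⟨by rw [sub_pos, div_lt_one hm0]; exact hXm, by linarith [div_nonneg hX0 hm0.le]⟩
    (fun i ↦ ⟨sub_pos.2 (hx i).2, by linarith [(hx i).1]⟩)
    (by rw [sum_sub_distrib, hxsum, ← hm]; field_simp; simp [hm])
  rw [← hm] at hcore
  have hmX : (m : ℝ) - X ≠ 0 := (sub_pos.2 hXm).ne'
  calc _ ≤ X + P * (1 - X ^ 2 + X * (1 - X) / 2 * S) := by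
        have hslope : 0 ≤ X - S * (1 - X) / 2 := by linarith
        nlinarith [mul_nonneg (mul_nonneg hP (sub_nonneg.2 hQ)) hslope]
    _ ≤ X + (1 - X / m) ^ m *
          (1 - X ^ 2 - m * (X * (1 - X) / 2) + X * (1 - X) / 2 * (m * (1 - X / m)⁻¹)) := by
        rw [hSinv]; linarith
    _ = _ := by field_simp; ring

theorem stmt_15 (I J : Type*) [Fintype I] [Fintype J] [Nonempty I] [Nonempty J]
    (m : ℕ) (hm : m = Fintype.card I)
    (X : ℝ) (hX0 : 0 ≤ X) (hX1 : X ≤ 1)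
    (x : I → ℝ) (hx : ∀ i, 0 ≤ x i ∧ x i < 1) (hxsum : ∑ i, x i = X)
    (y : J → ℝ) (hy : ∀ j, 0 ≤ y j ∧ y j ≤ 1) (hysum : ∑ j, y j = 1 - X) :
    (1 - (∏ i, (1 - x i)) * ∏ j, (1 - y j)) * X
      + (∏ i, (1 - x i))
      + (1 / 2) * (∏ i, (1 - x i)) * (∏ j, (1 - y j)) * (∑ i, x i / (1 - x i)) * (1 - X)
    ≤ (1 - X ^ 2 * (m * X + m - 2 * X) / (2 * (m - X))) * (1 - X / m) ^ m + X :=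
  stmt_15_general I J m hm X hX0 hX1 x hx hxsum y hy hysum
end

section
/- Let n ≥ 1, let α_1,…,α_n be nonnegative reals with Σ_{i=1}^n α_i = 1, and let (p_{ij})_{i≠j} be real numbers with 0 ≤ p_{ij} ≤ 1 and p_{ij} + p_{ji} = 1 for all i ≠ j. If λ ∈ ℝ satisfies λ ≤ α_i + Σ_{j≠i} α_j·p_{ij} for every i ∈ {1,…,n}, then λ ≤ 1/2 + (1/2)·Σ_{i=1}^n α_i². -/
/-!
Averaging the constraints with the weights `α i` gives
`λ ≤ ∑ i, α i ^ 2 + ∑ i, ∑ j ≠ i, α i * α j * p i j`.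
In the double sum the two ordered pairs `(i, j)` and `(j, i)` contribute together
`α i * α j * (p i j + p j i) = α i * α j`, so it is half of
`∑ i, ∑ j ≠ i, α i * α j = (∑ i, α i) ^ 2 - ∑ i, α i ^ 2 = 1 - ∑ i, α i ^ 2`.
-/

open Finset

section OffDiagonal

variable {ι R : Type*} [Fintype ι] [DecidableEq ι]

theorem sum_sum_erase_comm [AddCommGroup R] (f : ι → ι → R) :
    ∑ i, ∑ j ∈ univ.erase i, f i j = ∑ i, ∑ j ∈ univ.erase i, f j i := by
  simp only [sum_erase_eq_sub (mem_univ _), sum_sub_distrib]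
  rw [sum_comm]

theorem sum_sum_erase_mul [CommRing R] (a : ι → R) :
    ∑ i, ∑ j ∈ univ.erase i, a i * a j = (∑ i, a i) ^ 2 - ∑ i, a i ^ 2 := by
  simp only [← mul_sum, sum_erase_eq_sub (mem_univ _), sum_sub_distrib, sq, sum_mul]

theorem two_mul_sum_mul_sum_erase_mul_of_add_eq_one [CommRing R] (a : ι → R) (p : ι → ι → R)
    (hp : ∀ i j, i ≠ j → p i j + p j i = 1) :
    2 * ∑ i, a i * ∑ j ∈ univ.erase i, a j * p i j = (∑ i, a i) ^ 2 - ∑ i, a i ^ 2 := by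
  rw [two_mul]
  simp only [mul_sum]
  nth_rewrite 2 [sum_sum_erase_comm]
  simp only [← sum_add_distrib, ← sum_sum_erase_mul]
  refine sum_congr rfl fun i _ => sum_congr rfl fun j hj => ?_
  linear_combination (a i * a j) * hp i j (ne_of_mem_erase hj).symm

end OffDiagonal

theorem le_sum_mul_of_forall_le {ι R : Type*} [Fintype ι] [CommSemiring R] [PartialOrder R]
    [IsOrderedRing R] (w b : ι → R) (hw : ∀ i, 0 ≤ w i) (hw_sum : ∑ i, w i = 1) {c : R} (hc : ∀ i, c ≤ b i) : c ≤ ∑ i, w i * b i :=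
  calc c = ∑ i, w i * c := by rw [← sum_mul, hw_sum, one_mul]
    _ ≤ ∑ i, w i * b i := sum_le_sum fun i _ => mul_le_mul_of_nonneg_left (hc i) (hw i)

theorem stmt_17_general (n : ℕ) (α : Fin n → ℝ)
    (hα : ∀ i, 0 ≤ α i) (hsum : ∑ i, α i = 1)
    (p : Fin n → Fin n → ℝ)
    (hpsum : ∀ i j, i ≠ j → p i j + p j i = 1)
    (lam : ℝ)
    (hlam : ∀ i, lam ≤ α i + ∑ j ∈ Finset.univ.erase i, α j * p i j) :
    lam ≤ 1 / 2 + (1 / 2) * ∑ i, (α i) ^ 2 := by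
  have hcross := two_mul_sum_mul_sum_erase_mul_of_add_eq_one α p hpsum
  rw [hsum, one_pow] at hcross
  calc lam ≤ ∑ i, α i * (α i + ∑ j ∈ univ.erase i, α j * p i j) :=
        le_sum_mul_of_forall_le α _ hα hsum hlam
    _ = ∑ i, α i ^ 2 + ∑ i, α i * ∑ j ∈ univ.erase i, α j * p i j := by
        simp only [mul_add, sum_add_distrib, sq]
    _ = 1 / 2 + (1 / 2) * ∑ i, α i ^ 2 := by linarith

theorem stmt_17 (n : ℕ) (hn : 1 ≤ n) (α : Fin n → ℝ)
    (hα : ∀ i, 0 ≤ α i) (hsum : ∑ i, α i = 1)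
    (p : Fin n → Fin n → ℝ)
    (hp01 : ∀ i j, i ≠ j → 0 ≤ p i j ∧ p i j ≤ 1)
    (hpsum : ∀ i j, i ≠ j → p i j + p j i = 1)
    (lam : ℝ)
    (hlam : ∀ i, lam ≤ α i + ∑ j ∈ Finset.univ.erase i, α j * p i j) :
    lam ≤ 1 / 2 + (1 / 2) * ∑ i, (α i) ^ 2 :=
  stmt_17_general n α hα hsum p hpsum lam hlam
end
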